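/- arXiv:1606.07602 — 6 statements merged into one kernel-verified Lean document; each statement's English description precedes it below -/
import Mathlib

section
/- Let T be a Markov operator on L¹([0,1], λ) and let S₁, S₂, R₁, R₂ be Borel subsets of [0,1] with T𝟙_{S₁} = 𝟙_{R₁} a.e. and T𝟙_{S₂} = 𝟙_{R₂} a.e. Then T𝟙_{S₁ ∩ S₂} = 𝟙_{R₁ ∩ R₂} a.e. -/
open MeasureTheory Set unitInterval

noncomputable section

open Classical in
/-- The indicator function `𝟙_S` of a set `S ⊆ [0,1]`, as an element of `L¹([0,1], λ)`
(where `λ` is Lebesgue measure on the unit interval `I = [0,1]`).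
If `S` is not measurable we default to `0`. -/
def ind (S : Set I) : Lp ℝ 1 (volume : Measure I) :=
  if hS : MeasurableSet S then indicatorConstLp 1 hS (measure_ne_top _ _) (1:ℝ) else 0

/-- A Markov operator on `L¹([0,1], λ)`: a bounded linear operator `T` with
(i) `T𝟙 = 𝟙`, (ii) `∫ Tψ = ∫ ψ` for all `ψ ∈ L¹`, (iii) `Tψ ≥ 0` a.e. whenever `ψ ≥ 0` a.e. -/
structure IsMarkovOperator
    (T : Lp ℝ 1 (volume : Measure I) →L[ℝ] Lp ℝ 1 (volume : Measure I)) : Prop where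
  map_one : T (ind univ) = ind univ
  integral_map : ∀ ψ : Lp ℝ 1 (volume : Measure I), ∫ x, (T ψ) x = ∫ x, ψ x
  positive : ∀ ψ : Lp ℝ 1 (volume : Measure I), 0 ≤ᵐ[volume] ⇑ψ → 0 ≤ᵐ[volume] ⇑(T ψ)

/-! Positivity makes `T` monotone. In the lattice `L¹`, `𝟙_{A ∩ B} = 𝟙_A ⊓ 𝟙_B = (𝟙_A + 𝟙_B - 𝟙) ⊔ 0`;
applying the monotone, unital, linear `T` to the first form bounds `T 𝟙_{S₁ ∩ S₂}` above by
`𝟙_{R₁ ∩ R₂}`, and applying it to the second form bounds it below. -/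

open scoped ENNReal

namespace MeasureTheory

variable {α : Type*} [MeasurableSpace α] {μ : Measure α} {p : ℝ≥0∞} {s t : Set α}
  {c : ℝ}

theorem indicatorConstLp_inter_eq_inf (hs : MeasurableSet s) (ht : MeasurableSet t)
    (hμs : μ s ≠ ∞) (hμt : μ t ≠ ∞) (hc : 0 ≤ c) :
    indicatorConstLp p (hs.inter ht) (by finiteness) c =
      indicatorConstLp p hs hμs c ⊓ indicatorConstLp p ht hμt c := by
  ext1
  grw [Lp.coeFn_inf, indicatorConstLp_coeFn, indicatorConstLp_coeFn, indicatorConstLp_coeFn]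
  refine .of_eq (funext fun x => ?_)
  by_cases hxs : x ∈ s <;> by_cases hxt : x ∈ t <;> simp [hxs, hxt, hc]

theorem indicatorConstLp_inter_eq_sup [IsFiniteMeasure μ] (hs : MeasurableSet s)
    (ht : MeasurableSet t) (hc : 0 ≤ c) :
    indicatorConstLp p (hs.inter ht) (measure_ne_top μ _) c =
      (indicatorConstLp p hs (measure_ne_top μ s) c + indicatorConstLp p ht (measure_ne_top μ t) c
        - Lp.const p μ c) ⊔ 0 := by
  ext1
  grw [Lp.coeFn_sup, Lp.coeFn_sub, Lp.coeFn_add, Lp.coeFn_zero, Lp.coeFn_const,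
    indicatorConstLp_coeFn, indicatorConstLp_coeFn, indicatorConstLp_coeFn]
  refine .of_eq (funext fun x => ?_)
  by_cases hxs : x ∈ s <;> by_cases hxt : x ∈ t <;> simp [hxs, hxt, hc]

end MeasureTheory

theorem ind_of_measurableSet {S : Set I} (hS : MeasurableSet S) :
    ind S = indicatorConstLp 1 hS (measure_ne_top _ _) 1 :=
  dif_pos hS

theorem ind_univ : ind univ = Lp.const 1 volume 1 := by
  rw [ind_of_measurableSet .univ, indicatorConstLp_univ]

theorem ind_inter {A B : Set I} (hA : MeasurableSet A) (hB : MeasurableSet B) :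
    ind (A ∩ B) = ind A ⊓ ind B := by
  rw [ind_of_measurableSet (hA.inter hB), ind_of_measurableSet hA, ind_of_measurableSet hB,
    indicatorConstLp_inter_eq_inf hA hB _ _ zero_le_one]

theorem ind_inter_eq_sup {A B : Set I} (hA : MeasurableSet A) (hB : MeasurableSet B) :
    ind (A ∩ B) = (ind A + ind B - ind univ) ⊔ 0 := by
  rw [ind_of_measurableSet (hA.inter hB), ind_of_measurableSet hA, ind_of_measurableSet hB,
    ind_univ, indicatorConstLp_inter_eq_sup hA hB zero_le_one]

theorem IsMarkovOperator.monotone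
    {T : Lp ℝ 1 (volume : Measure I) →L[ℝ] Lp ℝ 1 (volume : Measure I)}
    (hT : IsMarkovOperator T) : Monotone T :=
  (monotone_iff_map_nonneg T).2 fun ψ hψ =>
    (Lp.coeFn_nonneg _).1 (hT.positive ψ ((Lp.coeFn_nonneg ψ).2 hψ))

/-- If `T` is a Markov operator on `L¹([0,1], λ)` and `S₁, S₂, R₁, R₂` are
Borel subsets of `[0,1]` with `T𝟙_{S₁} = 𝟙_{R₁}` a.e. and `T𝟙_{S₂} = 𝟙_{R₂}` a.e., then
`T𝟙_{S₁ ∩ S₂} = 𝟙_{R₁ ∩ R₂}` a.e. -/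
theorem stmt1
    (T : Lp ℝ 1 (volume : Measure I) →L[ℝ] Lp ℝ 1 (volume : Measure I))
    (hT : IsMarkovOperator T) (S₁ S₂ R₁ R₂ : Set I)
    (hS₁ : MeasurableSet S₁) (hS₂ : MeasurableSet S₂)
    (hR₁ : MeasurableSet R₁) (hR₂ : MeasurableSet R₂)
    (h₁ : T (ind S₁) = ind R₁) (h₂ : T (ind S₂) = ind R₂) :
    T (ind (S₁ ∩ S₂)) = ind (R₁ ∩ R₂) := by
  apply le_antisymm
  · rw [ind_inter hR₁ hR₂, ← h₁, ← h₂]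
    exact le_inf (hT.monotone ((ind_inter hS₁ hS₂).trans_le inf_le_left))
      (hT.monotone ((ind_inter hS₁ hS₂).trans_le inf_le_right))
  · rw [ind_inter_eq_sup hR₁ hR₂, ← h₁, ← h₂, ← hT.map_one, ← map_add, ← map_sub]
    refine sup_le (hT.monotone ?_) ?_
    · rw [ind_inter_eq_sup hS₁ hS₂]
      exact le_sup_left
    · rw [← map_zero T]
      exact hT.monotone ((ind_inter_eq_sup hS₁ hS₂).trans_ge le_sup_right)
end
end

section
/- Let T be a Markov operator on L¹([0,1], λ). Then the collections σ_T and σ*_T are σ-algebras of Borel subsets of [0,1]: each contains ∅ and [0,1], is closed under complementation (in [0,1]), and is closed under countable unions. -/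
open MeasureTheory Set unitInterval

noncomputable section

/-- `σ_T`: the collection of Borel sets `S ⊆ [0,1]` with `T𝟙_S = 𝟙_R` (λ-a.e.) for some Borel
`R ⊆ [0,1]`.  (Equality in `L¹` is exactly λ-a.e. equality.) -/
def sigmaT (T : Lp ℝ 1 (volume : Measure I) →L[ℝ] Lp ℝ 1 (volume : Measure I)) :
    Set (Set I) :=
  {S | MeasurableSet S ∧ ∃ R : Set I, MeasurableSet R ∧ T (ind S) = ind R}

/-- `σ*_T`: the collection of Borel sets `R ⊆ [0,1]` with `T𝟙_S = 𝟙_R` (λ-a.e.) for some Borel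
`S ⊆ [0,1]`. -/
def sigmaTstar (T : Lp ℝ 1 (volume : Measure I) →L[ℝ] Lp ℝ 1 (volume : Measure I)) :
    Set (Set I) :=
  {R | MeasurableSet R ∧ ∃ S : Set I, MeasurableSet S ∧ T (ind S) = ind R}

/-!
Say `T` maps `S` to `R` when `T𝟙_S = 𝟙_R`. Complements are preserved because `T𝟙 = 𝟙` and `T`
is linear. For unions, positivity makes `T` monotone, so `T𝟙_{S ∪ S'}` lies above `𝟙_R ⊔ 𝟙_{R'}`
and below `(𝟙_R + 𝟙_{R'}) ⊓ 𝟙`; for indicators these two bounds coincide with `𝟙_{R ∪ R'}`.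
Countable unions follow from finite ones since `T` is continuous and `𝟙_{S₁ ∪ ⋯ ∪ Sₙ} → 𝟙_{⋃ Sₙ}`
in `L¹`.
-/

open Filter Topology

theorem MeasurableSet.accumulate {α ι : Type*} [MeasurableSpace α] [Preorder ι] [Countable ι]
    {s : ι → Set α} (hs : ∀ i, MeasurableSet (s i)) (i : ι) : MeasurableSet (accumulate s i) :=
  .biUnion (to_countable _) fun j _ ↦ hs j

namespace MeasureTheory

theorem tendsto_indicatorConstLp_accumulate {α E : Type*} [MeasurableSpace α] {μ : Measure α}
    [IsFiniteMeasure μ] [NormedAddCommGroup E] {p : ENNReal} [Fact (1 ≤ p)] (hp : p ≠ ⊤)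
    {s : ℕ → Set α} (hs : ∀ n, MeasurableSet (s n)) (c : E) :
    Tendsto
      (fun n ↦ indicatorConstLp p (MeasurableSet.accumulate hs n) (measure_ne_top μ _) c)
      atTop (𝓝 (indicatorConstLp p (MeasurableSet.iUnion hs) (measure_ne_top _ _) c)) := by
  refine tendsto_indicatorConstLp_set hp ?_
  have hsub : ∀ n, accumulate s n ⊆ ⋃ n, s n := accumulate_subset_iUnion
  have hlim := ENNReal.Tendsto.sub tendsto_const_nhds
    (tendsto_measure_iUnion_accumulate (μ := μ) (f := s)) (Or.inl (measure_ne_top μ (⋃ n, s n)))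
  rw [tsub_self] at hlim
  refine hlim.congr fun n ↦ ?_
  rw [symmDiff_of_le (hsub n),
    measure_sdiff (hsub n) (MeasurableSet.accumulate hs n).nullMeasurableSet (measure_ne_top _ _)]

end MeasureTheory

namespace MarkovOperator

theorem ind_of_measurableSet {S : Set I} (hS : MeasurableSet S) :
    ind S = indicatorConstLp 1 hS (measure_ne_top _ _) (1 : ℝ) :=
  dif_pos hS

theorem coeFn_ind {S : Set I} (hS : MeasurableSet S) :
    ⇑(ind S) =ᵐ[volume] S.indicator 1 := by
  rw [ind_of_measurableSet hS]
  exact indicatorConstLp_coeFn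

theorem ind_empty : ind (∅ : Set I) = 0 := by
  rw [ind_of_measurableSet MeasurableSet.empty, indicatorConstLp_empty]

theorem ind_compl {S : Set I} (hS : MeasurableSet S) : ind Sᶜ = ind univ - ind S := by
  refine Lp.ext ?_
  filter_upwards [coeFn_ind hS.compl, coeFn_ind hS, coeFn_ind MeasurableSet.univ,
    Lp.coeFn_sub (ind univ) (ind S)] with x hSc hS hU hsub
  rw [hSc, hsub, Pi.sub_apply, hS, hU]
  by_cases hx : x ∈ S <;> simp [hx]

theorem ind_mono {S S' : Set I} (hS : MeasurableSet S) (hS' : MeasurableSet S') (h : S ⊆ S') :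
    ind S ≤ ind S' := by
  rw [← Lp.coeFn_le]
  filter_upwards [coeFn_ind hS, coeFn_ind hS'] with x hx hx'
  rw [hx, hx']
  exact indicator_le_indicator_of_subset h (fun _ ↦ zero_le_one) x

theorem ind_union {S S' : Set I} (hS : MeasurableSet S) (hS' : MeasurableSet S') :
    ind (S ∪ S') = ind S ⊔ ind S' := by
  refine Lp.ext ?_
  filter_upwards [coeFn_ind (hS.union hS'), coeFn_ind hS, coeFn_ind hS',
    Lp.coeFn_sup (ind S) (ind S')] with x hU hx hx' hsup
  rw [hU, hsup, Pi.sup_apply, hx, hx']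
  by_cases h : x ∈ S <;> by_cases h' : x ∈ S' <;> simp [h, h']

theorem ind_union_eq_add_inf_univ {S S' : Set I} (hS : MeasurableSet S) (hS' : MeasurableSet S') :
    ind (S ∪ S') = (ind S + ind S') ⊓ ind univ := by
  refine Lp.ext ?_
  filter_upwards [coeFn_ind (hS.union hS'), coeFn_ind hS, coeFn_ind hS',
    coeFn_ind MeasurableSet.univ, Lp.coeFn_inf (ind S + ind S') (ind univ),
    Lp.coeFn_add (ind S) (ind S')] with x hU hx hx' huniv hinf hadd
  rw [hU, hinf, Pi.inf_apply, hadd, Pi.add_apply, hx, hx', huniv]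
  by_cases h : x ∈ S <;> by_cases h' : x ∈ S' <;> norm_num [h, h']

theorem tendsto_ind_accumulate {s : ℕ → Set I} (hs : ∀ n, MeasurableSet (s n)) :
    Tendsto (fun n ↦ ind (accumulate s n)) atTop (𝓝 (ind (⋃ n, s n))) := by
  simp only [ind_of_measurableSet (MeasurableSet.iUnion hs),
    ind_of_measurableSet (MeasurableSet.accumulate hs _)]
  exact tendsto_indicatorConstLp_accumulate ENNReal.one_ne_top hs 1

variable {T : Lp ℝ 1 (volume : Measure I) →L[ℝ] Lp ℝ 1 (volume : Measure I)}

theorem _root_.IsMarkovOperator.monotone_s2 (hT : IsMarkovOperator T) : Monotone T := by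
  intro φ ψ h
  rw [← sub_nonneg, ← Lp.coeFn_nonneg] at h
  rw [← sub_nonneg, ← map_sub, ← Lp.coeFn_nonneg]
  exact hT.positive _ h

def MapsIndicator (T : Lp ℝ 1 (volume : Measure I) →L[ℝ] Lp ℝ 1 (volume : Measure I))
    (S R : Set I) : Prop :=
  MeasurableSet S ∧ MeasurableSet R ∧ T (ind S) = ind R

theorem mem_sigmaT {S : Set I} : S ∈ sigmaT T ↔ ∃ R, MapsIndicator T S R :=
  ⟨fun ⟨hS, R, hR, h⟩ ↦ ⟨R, hS, hR, h⟩, fun ⟨R, hS, hR, h⟩ ↦ ⟨hS, R, hR, h⟩⟩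

theorem mem_sigmaTstar {R : Set I} : R ∈ sigmaTstar T ↔ ∃ S, MapsIndicator T S R :=
  ⟨fun ⟨hR, S, hS, h⟩ ↦ ⟨S, hS, hR, h⟩, fun ⟨S, hS, hR, h⟩ ↦ ⟨hR, S, hS, h⟩⟩

namespace MapsIndicator

theorem empty : MapsIndicator T ∅ ∅ :=
  ⟨MeasurableSet.empty, MeasurableSet.empty, by rw [ind_empty, map_zero]⟩

theorem univ (hT : IsMarkovOperator T) : MapsIndicator T univ univ :=
  ⟨MeasurableSet.univ, MeasurableSet.univ, hT.map_one⟩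

theorem compl (hT : IsMarkovOperator T) {S R : Set I} (h : MapsIndicator T S R) :
    MapsIndicator T Sᶜ Rᶜ := by
  obtain ⟨hS, hR, hSR⟩ := h
  refine ⟨hS.compl, hR.compl, ?_⟩
  rw [ind_compl hS, map_sub, hT.map_one, hSR, ind_compl hR]

theorem union (hT : IsMarkovOperator T) {S S' R R' : Set I} (h : MapsIndicator T S R)
    (h' : MapsIndicator T S' R') : MapsIndicator T (S ∪ S') (R ∪ R') := by
  obtain ⟨hS, hR, hSR⟩ := h
  obtain ⟨hS', hR', hSR'⟩ := h'
  have hU := ind_union_eq_add_inf_univ hS hS'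
  refine ⟨hS.union hS', hR.union hR', le_antisymm ?_ ?_⟩
  · calc T (ind (S ∪ S')) ≤ T (ind S + ind S') ⊓ T (ind Set.univ) :=
          le_inf (hT.monotone_s2 (hU ▸ inf_le_left)) (hT.monotone_s2 (hU ▸ inf_le_right))
      _ = ind (R ∪ R') := by rw [map_add, hSR, hSR', hT.map_one, ind_union_eq_add_inf_univ hR hR']
  · calc ind (R ∪ R') = T (ind S) ⊔ T (ind S') := by rw [hSR, hSR', ind_union hR hR']
      _ ≤ T (ind (S ∪ S')) :=
          sup_le (hT.monotone_s2 (ind_mono hS (hS.union hS') subset_union_left))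
            (hT.monotone_s2 (ind_mono hS' (hS.union hS') subset_union_right))

theorem accumulate (hT : IsMarkovOperator T) {f g : ℕ → Set I}
    (h : ∀ n, MapsIndicator T (f n) (g n)) (n : ℕ) :
    MapsIndicator T (Set.accumulate f n) (Set.accumulate g n) := by
  induction n with
  | zero => simpa using h 0
  | succ n ih => simpa using ih.union hT (h (n + 1))

theorem iUnion (hT : IsMarkovOperator T) {f g : ℕ → Set I}
    (h : ∀ n, MapsIndicator T (f n) (g n)) : MapsIndicator T (⋃ n, f n) (⋃ n, g n) := by
  have hf n := (h n).1
  have hg n := (h n).2.1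
  have hlim := (T.continuous.tendsto _).comp (tendsto_ind_accumulate hf)
  refine ⟨.iUnion hf, .iUnion hg, tendsto_nhds_unique ?_ (tendsto_ind_accumulate hg)⟩
  exact hlim.congr fun n ↦ (accumulate hT h n).2.2

end MapsIndicator

end MarkovOperator

open MarkovOperator in
/-- For a Markov operator `T` on `L¹([0,1], λ)`, the collections `σ_T` and
`σ*_T` are σ-algebras of Borel subsets of `[0,1]`: each contains `∅` and `[0,1]` (i.e. `univ`),
is closed under complementation (in `[0,1]`), and is closed under countable unions. -/
theorem stmt2
    (T : Lp ℝ 1 (volume : Measure I) →L[ℝ] Lp ℝ 1 (volume : Measure I))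
    (hT : IsMarkovOperator T) :
    ((∅ : Set I) ∈ sigmaT T ∧ (univ : Set I) ∈ sigmaT T ∧
      (∀ S ∈ sigmaT T, Sᶜ ∈ sigmaT T) ∧
      (∀ f : ℕ → Set I, (∀ n, f n ∈ sigmaT T) → (⋃ n, f n) ∈ sigmaT T)) ∧
    ((∅ : Set I) ∈ sigmaTstar T ∧ (univ : Set I) ∈ sigmaTstar T ∧
      (∀ R ∈ sigmaTstar T, Rᶜ ∈ sigmaTstar T) ∧
      (∀ f : ℕ → Set I, (∀ n, f n ∈ sigmaTstar T) → (⋃ n, f n) ∈ sigmaTstar T)) := by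
  simp only [mem_sigmaT, mem_sigmaTstar]
  refine ⟨⟨⟨∅, .empty⟩, ⟨univ, .univ hT⟩, ?_, ?_⟩, ⟨⟨∅, .empty⟩, ⟨univ, .univ hT⟩, ?_, ?_⟩⟩
  · rintro S ⟨R, h⟩
    exact ⟨Rᶜ, h.compl hT⟩
  · intro f hf
    choose g hg using hf
    exact ⟨⋃ n, g n, .iUnion hT hg⟩
  · rintro R ⟨S, h⟩
    exact ⟨Sᶜ, h.compl hT⟩
  · intro g hg
    choose f hf using hg
    exact ⟨⋃ n, f n, .iUnion hT hf⟩
end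
end

section
/- Let T be a Markov operator on L¹([0,1], λ) that is self-adjoint (∫ (Tψ)·φ dλ = ∫ ψ·(Tφ) dλ for all ψ ∈ L¹ and all bounded measurable φ) and idempotent (T ∘ T = T). Then σ_T = σ*_T and both are equal to the σ-algebra of invariant sets {S ⊆ [0,1] Borel : T𝟙_S = 𝟙_S a.e.}. (This applies in particular to the Markov operator of a non-atomic idempotent copula, since idempotent copulas are symmetric.) -/
/-! If `T𝟙_S = 𝟙_R`, idempotence makes `R` invariant, so self-adjointness gives
`λ(R) = ∫ T𝟙_S · 𝟙_R = ∫ 𝟙_S · T𝟙_R = λ(S ∩ R)`, while preservation of integrals gives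
`λ(S) = λ(R)`. Hence `S = R` a.e. and `S` is invariant; conversely every `R ∈ σ*_T` is
invariant by idempotence. -/

open MeasureTheory Set unitInterval

noncomputable section

def IsSelfAdjointOnBounded (T : Lp ℝ 1 (volume : Measure I) →L[ℝ] Lp ℝ 1 (volume : Measure I)) :
    Prop :=
  ∀ (ψ : Lp ℝ 1 (volume : Measure I)) (φ : I → ℝ), Measurable φ → (∃ c : ℝ, ∀ x, |φ x| ≤ c) →
    ∀ φL : Lp ℝ 1 (volume : Measure I), ⇑φL =ᵐ[volume] φ →
      ∫ x, (T ψ) x * φ x = ∫ x, ψ x * (T φL) x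

def invariantSets (T : Lp ℝ 1 (volume : Measure I) →L[ℝ] Lp ℝ 1 (volume : Measure I)) :
    Set (Set I) :=
  {S | MeasurableSet S ∧ T (ind S) = ind S}

theorem ind_coeFn {S : Set I} (hS : MeasurableSet S) :
    ⇑(ind S) =ᵐ[volume] S.indicator 1 := by
  rw [ind, dif_pos hS]
  exact indicatorConstLp_coeFn

theorem ind_eq_of_ae_eq {S R : Set I} (hS : MeasurableSet S) (hR : MeasurableSet R)
    (hSR : S =ᵐ[volume] R) : ind S = ind R :=
  Lp.ext <| (ind_coeFn hS).trans <| (indicator_ae_eq_of_ae_eq_set hSR).trans (ind_coeFn hR).symm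

theorem integral_ind_mul {S R : Set I} (hS : MeasurableSet S) (hR : MeasurableSet R)
    {f : I → ℝ} (hf : f =ᵐ[volume] R.indicator 1) :
    ∫ x, ind S x * f x = volume.real (S ∩ R) := by
  have hprod : (fun x => ind S x * f x) =ᵐ[volume] (S ∩ R).indicator 1 := by
    filter_upwards [ind_coeFn hS, hf] with x hxS hxR
    rw [hxS, hxR, inter_indicator_one, Pi.mul_apply]
  rw [integral_congr_ae hprod, integral_indicator_one (hS.inter hR)]

theorem integral_ind {S : Set I} (hS : MeasurableSet S) :
    ∫ x, ind S x = volume.real S := by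
  simpa using integral_ind_mul hS MeasurableSet.univ (f := 1) (by simp)

theorem ae_eq_of_measureReal_eq_of_measureReal_inter_eq {α : Type*} [MeasurableSpace α]
    {μ : Measure α} [IsFiniteMeasure μ] {S R : Set α} (hS : MeasurableSet S)
    (hR : MeasurableSet R) (hSR : μ.real S = μ.real R) (hinter : μ.real (S ∩ R) = μ.real R) :
    S =ᵐ[μ] R := by
  have hSR' : μ S = μ R := (measureReal_eq_measureReal_iff).mp hSR
  have hinter' : μ (S ∩ R) = μ R := (measureReal_eq_measureReal_iff).mp hinter
  have hS' : (S ∩ R : Set α) =ᵐ[μ] S := ae_eq_of_subset_of_measure_ge inter_subset_left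
    (by rw [hinter', hSR']) (hS.inter hR).nullMeasurableSet (measure_ne_top _ _)
  have hR' : (S ∩ R : Set α) =ᵐ[μ] R := ae_eq_of_subset_of_measure_ge inter_subset_right
    hinter'.ge (hS.inter hR).nullMeasurableSet (measure_ne_top _ _)
  exact hS'.symm.trans hR'

section SelfAdjointIdempotent

variable {T : Lp ℝ 1 (volume : Measure I) →L[ℝ] Lp ℝ 1 (volume : Measure I)}

theorem sigmaTstar_eq_invariantSets (hidem : ∀ ψ, T (T ψ) = T ψ) :
    sigmaTstar T = invariantSets T := by
  ext R
  constructor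
  · rintro ⟨hR, S, -, hTS⟩
    exact ⟨hR, by rw [← hTS, hidem]⟩
  · rintro ⟨hR, hTR⟩
    exact ⟨hR, R, hR, hTR⟩

theorem ind_eq_of_map_ind_eq_ind
    (hint : ∀ ψ : Lp ℝ 1 (volume : Measure I), ∫ x, T ψ x = ∫ x, ψ x)
    (hself : IsSelfAdjointOnBounded T) (hidem : ∀ ψ, T (T ψ) = T ψ) {S R : Set I}
    (hS : MeasurableSet S) (hR : MeasurableSet R)
    (hTSR : T (ind S) = ind R) : ind S = ind R := by
  have hTR : T (ind R) = ind R := by rw [← hTSR, hidem]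
  have hmeas : volume.real S = volume.real R := by
    rw [← integral_ind hS, ← integral_ind hR, ← hTSR, hint]
  have hbdd : ∃ c : ℝ, ∀ x, |R.indicator (1 : I → ℝ) x| ≤ c :=
    ⟨1, fun x => by by_cases hx : x ∈ R <;> simp [hx]⟩
  have hadj := hself (ind S) (R.indicator 1) (measurable_one.indicator hR) hbdd (ind R)
    (ind_coeFn hR)
  rw [hTSR, hTR, integral_ind_mul hR hR (ae_eq_refl _), inter_self,
    integral_ind_mul hS hR (ind_coeFn hR)] at hadj
  exact ind_eq_of_ae_eq hS hR
    (ae_eq_of_measureReal_eq_of_measureReal_inter_eq hS hR hmeas hadj.symm)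

theorem sigmaT_eq_invariantSets
    (hint : ∀ ψ : Lp ℝ 1 (volume : Measure I), ∫ x, T ψ x = ∫ x, ψ x)
    (hself : IsSelfAdjointOnBounded T) (hidem : ∀ ψ, T (T ψ) = T ψ) :
    sigmaT T = invariantSets T := by
  ext S
  constructor
  · rintro ⟨hS, R, hR, hTSR⟩
    exact ⟨hS, by rw [hTSR, ind_eq_of_map_ind_eq_ind hint hself hidem hS hR hTSR]⟩
  · rintro ⟨hS, hTS⟩
    exact ⟨hS, S, hS, hTS⟩

end SelfAdjointIdempotent

/-- Let `T` be a Markov operator on `L¹([0,1], λ)` that is self-adjoint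
(`∫ (Tψ)·φ dλ = ∫ ψ·(Tφ) dλ` for all `ψ ∈ L¹` and all bounded measurable `φ`, where
`Tφ` is applied to any `L¹`-representative of `φ`) and idempotent (`T ∘ T = T`).  Then
`σ_T = σ*_T` and both are equal to the σ-algebra of invariant sets
`{S ⊆ [0,1] Borel : T𝟙_S = 𝟙_S a.e.}`. -/
theorem stmt4
    (T : Lp ℝ 1 (volume : Measure I) →L[ℝ] Lp ℝ 1 (volume : Measure I))
    (hT : IsMarkovOperator T)
    (hself : ∀ (ψ : Lp ℝ 1 (volume : Measure I)) (φ : I → ℝ), Measurable φ →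
      (∃ c : ℝ, ∀ x, |φ x| ≤ c) →
      ∀ φL : Lp ℝ 1 (volume : Measure I), ⇑φL =ᵐ[volume] φ →
        ∫ x, (T ψ) x * φ x = ∫ x, ψ x * (T φL) x)
    (hidem : ∀ ψ : Lp ℝ 1 (volume : Measure I), T (T ψ) = T ψ) :
    sigmaT T = sigmaTstar T ∧
    sigmaT T = {S : Set I | MeasurableSet S ∧ T (ind S) = ind S} := by
  have hsigma := sigmaT_eq_invariantSets hT.integral_map hself hidem
  exact ⟨hsigma.trans (sigmaTstar_eq_invariantSets hidem).symm, hsigma⟩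
end
end

section
/- Let T be a Markov operator on L¹([0,1], λ) and let f, g : [0,1] → [0,1] be measure-preserving Borel functions such that T𝟙_{g⁻¹(B)} = 𝟙_{f⁻¹(B)} λ-a.e. for every Borel B ⊆ [0,1]. Then g⁻¹(B) ∈ σ_T and f⁻¹(B) ∈ σ*_T for every Borel B ⊆ [0,1], and both σ_T and σ*_T are non-atomic. -/
open MeasureTheory Set unitInterval

noncomputable section

/-- A collection `𝒮` of Borel subsets of `[0,1]` is non-atomic (w.r.t. Lebesgue measure) if
there is no `S ∈ 𝒮` with `λ(S) > 0` such that every `E ∈ 𝒮` satisfies `λ(S ∩ E) = 0` or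
`λ(S ∩ E) = λ(S)`. -/
def NonAtomicFamily (𝒮 : Set (Set I)) : Prop :=
  ¬ ∃ S ∈ 𝒮, 0 < volume S ∧ ∀ E ∈ 𝒮, volume (S ∩ E) = 0 ∨ volume (S ∩ E) = volume S

/-!
Membership in `σ_T` and `σ*_T` is immediate from the hypothesis. For non-atomicity, suppose a set
`S` of positive measure met every `h⁻¹(B)` (with `h = g` or `h = f`) in a null or a conull part
of `S`. Then the image under `h` of normalized Lebesgue measure on `S` would be a zero-one
probability measure on `[0,1]`, hence a Dirac mass. But since `h` preserves `λ`, this image is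
absolutely continuous with respect to `λ`, which has no atoms.
-/

open ProbabilityTheory in
theorem MeasureTheory.MeasurePreserving.exists_measure_inter_preimage_ne
    {α β : Type*} [MeasurableSpace α] [MeasurableSpace β] [StandardBorelSpace β]
    {μ : Measure α} {ν : Measure β} [NullSingletonClass ν] {h : α → β}
    (hh : MeasurePreserving h μ ν) {S : Set α} (hS₀ : μ S ≠ 0) (hS : μ S ≠ ⊤) :
    ∃ B, MeasurableSet B ∧ μ (S ∩ h ⁻¹' B) ≠ 0 ∧ μ (S ∩ h ⁻¹' B) ≠ μ S := by
  by_contra! hatom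
  have := cond_isProbabilityMeasure_of_finite hS₀ hS
  have := Measure.isProbabilityMeasure_map (μ := μ[|S]) hh.measurable.aemeasurable
  have : IsZeroOneMeasure ((μ[|S]).map h) := by
    refine ⟨fun B hB => ?_⟩
    rw [Measure.map_apply hh.measurable hB, cond_apply' (hh.measurable hB)]
    rcases eq_or_ne (μ (S ∩ h ⁻¹' B)) 0 with h0 | h0
    · simp [h0]
    · exact Or.inr (by rw [hatom B hB h0, ENNReal.inv_mul_cancel hS₀ hS])
  obtain ⟨x, hx⟩ := IsZeroOneMeasure.exists_eq_dirac (μ := (μ[|S]).map h)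
  have hac : (μ[|S]).map h ≪ ν := hh.map_eq ▸ cond_absolutelyContinuous.map hh.measurable
  simpa [hx] using hac (measure_singleton (μ := ν) x)

theorem nonAtomicFamily_of_preimage_mem {𝒮 : Set (Set I)} {h : I → I}
    (hh : MeasurePreserving h volume volume)
    (hpre : ∀ B : Set I, MeasurableSet B → h ⁻¹' B ∈ 𝒮) : NonAtomicFamily 𝒮 := by
  rintro ⟨S, -, hS₀, hatom⟩
  obtain ⟨B, hB, hne₀, hne⟩ := hh.exists_measure_inter_preimage_ne hS₀.ne' (measure_ne_top _ S)
  exact (hatom _ (hpre B hB)).elim hne₀ hne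

theorem stmt9_general
    (T : Lp ℝ 1 (volume : Measure I) →L[ℝ] Lp ℝ 1 (volume : Measure I))
    (f g : I → I)
    (hf : MeasurePreserving f volume volume) (hg : MeasurePreserving g volume volume)
    (h : ∀ B : Set I, MeasurableSet B → T (ind (g ⁻¹' B)) = ind (f ⁻¹' B)) :
    (∀ B : Set I, MeasurableSet B → g ⁻¹' B ∈ sigmaT T ∧ f ⁻¹' B ∈ sigmaTstar T) ∧
    NonAtomicFamily (sigmaT T) ∧ NonAtomicFamily (sigmaTstar T) := by
  have hmem : ∀ B : Set I, MeasurableSet B → g ⁻¹' B ∈ sigmaT T ∧ f ⁻¹' B ∈ sigmaTstar T :=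
    fun B hB => ⟨⟨hg.measurable hB, f ⁻¹' B, hf.measurable hB, h B hB⟩,
      ⟨hf.measurable hB, g ⁻¹' B, hg.measurable hB, h B hB⟩⟩
  exact ⟨hmem, nonAtomicFamily_of_preimage_mem hg fun B hB => (hmem B hB).1,
    nonAtomicFamily_of_preimage_mem hf fun B hB => (hmem B hB).2⟩

/-- Let `T` be a Markov operator on `L¹([0,1], λ)` and `f, g : [0,1] → [0,1]`
measure-preserving Borel functions with `T𝟙_{g⁻¹(B)} = 𝟙_{f⁻¹(B)}` λ-a.e. for every Borel
`B ⊆ [0,1]`.  Then `g⁻¹(B) ∈ σ_T` and `f⁻¹(B) ∈ σ*_T` for every Borel `B ⊆ [0,1]`, and both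
`σ_T` and `σ*_T` are non-atomic. -/
theorem stmt9
    (T : Lp ℝ 1 (volume : Measure I) →L[ℝ] Lp ℝ 1 (volume : Measure I))
    (hT : IsMarkovOperator T) (f g : I → I)
    (hf : MeasurePreserving f volume volume) (hg : MeasurePreserving g volume volume)
    (h : ∀ B : Set I, MeasurableSet B → T (ind (g ⁻¹' B)) = ind (f ⁻¹' B)) :
    (∀ B : Set I, MeasurableSet B → g ⁻¹' B ∈ sigmaT T ∧ f ⁻¹' B ∈ sigmaTstar T) ∧
    NonAtomicFamily (sigmaT T) ∧ NonAtomicFamily (sigmaTstar T) :=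
  stmt9_general T f g hf hg h
end
end

section
/- Let 𝒮 be a sub-σ-algebra of the Borel σ-algebra of [0,1] and let Ψ be a map assigning to each S ∈ 𝒮 a Borel set Ψ(S) ⊆ [0,1] such that: λ(Ψ(S)) = λ(S) for all S ∈ 𝒮; λ(Ψ(S) △ Ψ(S′)) = 0 whenever λ(S △ S′) = 0; λ(Ψ(Sᶜ) △ Ψ(S)ᶜ) = 0 for all S ∈ 𝒮; λ(Ψ(S₁ ∪ S₂) △ (Ψ(S₁) ∪ Ψ(S₂))) = 0 for all S₁, S₂ ∈ 𝒮; and Ψ is surjective modulo null sets: for every Borel B ⊆ [0,1] there is S ∈ 𝒮 with λ(Ψ(S) △ B) = 0. Then there exists a measure-preserving Borel function h : [0,1] → [0,1] such that for every Borel B ⊆ [0,1] and every S ∈ 𝒮 with λ(Ψ(S) △ B) = 0 one has λ(S △ h⁻¹(B)) = 0; moreover h is unique up to λ-a.e. equality among measure-preserving Borel functions with this property. -/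
open MeasureTheory Set unitInterval
open Filter
open scoped symmDiff Topology

noncomputable section

set_option maxHeartbeats 2000000

private lemma aeeq_iUnion {α : Type*} [MeasurableSpace α] {μ : Measure α}
    {f g : ℕ → Set α} (h : ∀ n, f n =ᵐ[μ] g n) : (⋃ n, f n) =ᵐ[μ] ⋃ n, g n := by
  rw [← measure_symmDiff_eq_zero_iff]
  refine measure_mono_null ?_ (measure_iUnion_null fun n => measure_symmDiff_eq_zero_iff.mpr (h n))
  intro x hx
  simp only [Set.mem_symmDiff, Set.mem_iUnion] at hx ⊢
  rcases hx with ⟨⟨n, hn⟩, hg⟩ | ⟨⟨n, hn⟩, hf⟩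
  · exact ⟨n, Or.inl ⟨hn, fun h' => hg ⟨n, h'⟩⟩⟩
  · exact ⟨n, Or.inr ⟨hn, fun h' => hf ⟨n, h'⟩⟩⟩

private lemma acc_succ' {α : Type*} (g : ℕ → Set α) (n : ℕ) :
    accumulate g (n+1) = accumulate g n ∪ g (n+1) := by
  ext x
  simp only [Set.mem_accumulate, Set.mem_union, Nat.le_add_one_iff]
  constructor
  · rintro ⟨y, hy | rfl, hx⟩
    · exact Or.inl ⟨y, hy, hx⟩
    · exact Or.inr hx
  · rintro (⟨y, hy, hx⟩ | hx)
    · exact ⟨y, Or.inl hy, hx⟩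
    · exact ⟨n+1, Or.inr rfl, hx⟩

private lemma acc_zero' {α : Type*} (g : ℕ → Set α) : accumulate g 0 = g 0 := by
  ext x; simp [Set.mem_accumulate, Nat.le_zero]


/-- Let `𝒮` be a sub-σ-algebra of the Borel σ-algebra of `[0,1]` and `Ψ` a
map assigning to each `S ∈ 𝒮` a Borel set `Ψ(S) ⊆ [0,1]` such that: `λ(Ψ(S)) = λ(S)`;
`λ(Ψ(S) ∆ Ψ(S′)) = 0` whenever `λ(S ∆ S′) = 0`; `λ(Ψ(Sᶜ) ∆ Ψ(S)ᶜ) = 0`;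
`λ(Ψ(S₁ ∪ S₂) ∆ (Ψ(S₁) ∪ Ψ(S₂))) = 0`; and `Ψ` is surjective modulo null sets.  Then there
exists a measure-preserving Borel function `h : [0,1] → [0,1]` such that for every Borel
`B ⊆ [0,1]` and every `S ∈ 𝒮` with `λ(Ψ(S) ∆ B) = 0` one has `λ(S ∆ h⁻¹(B)) = 0`; moreover
`h` is unique up to λ-a.e. equality among measure-preserving Borel functions with this
property. -/
theorem stmt11
    (𝒮 : Set (Set I))
    (hmeas : ∀ S ∈ 𝒮, MeasurableSet S)
    (huniv : (univ : Set I) ∈ 𝒮)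
    (hcompl : ∀ S ∈ 𝒮, Sᶜ ∈ 𝒮)
    (hunion : ∀ f : ℕ → Set I, (∀ n, f n ∈ 𝒮) → (⋃ n, f n) ∈ 𝒮)
    (Ψ : Set I → Set I)
    (hΨmeas : ∀ S ∈ 𝒮, MeasurableSet (Ψ S))
    (hΨvol : ∀ S ∈ 𝒮, volume (Ψ S) = volume S)
    (hΨae : ∀ S ∈ 𝒮, ∀ S' ∈ 𝒮, volume (S ∆ S') = 0 → volume (Ψ S ∆ Ψ S') = 0)
    (hΨcompl : ∀ S ∈ 𝒮, volume (Ψ Sᶜ ∆ (Ψ S)ᶜ) = 0)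
    (hΨunion : ∀ S₁ ∈ 𝒮, ∀ S₂ ∈ 𝒮, volume (Ψ (S₁ ∪ S₂) ∆ (Ψ S₁ ∪ Ψ S₂)) = 0)
    (hΨsurj : ∀ B : Set I, MeasurableSet B → ∃ S ∈ 𝒮, volume (Ψ S ∆ B) = 0) :
    ∃ h : I → I, MeasurePreserving h volume volume ∧
      (∀ B : Set I, MeasurableSet B → ∀ S ∈ 𝒮, volume (Ψ S ∆ B) = 0 →
        volume (S ∆ (h ⁻¹' B)) = 0) ∧
      (∀ h' : I → I, MeasurePreserving h' volume volume →
        (∀ B : Set I, MeasurableSet B → ∀ S ∈ 𝒮, volume (Ψ S ∆ B) = 0 →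
          volume (S ∆ (h' ⁻¹' B)) = 0) →
        h' =ᵐ[volume] h) := by
  classical
  -- closure properties of 𝒮
  have hunion2 : ∀ S₁ ∈ 𝒮, ∀ S₂ ∈ 𝒮, S₁ ∪ S₂ ∈ 𝒮 := by
    intro S₁ h1 S₂ h2
    have hrw : S₁ ∪ S₂ = ⋃ n : ℕ, (if n = 0 then S₁ else S₂) := by
      apply Subset.antisymm
      · rintro x (hx | hx)
        · exact mem_iUnion.2 ⟨0, by simpa using hx⟩
        · exact mem_iUnion.2 ⟨1, by simpa using hx⟩
      · intro x hx
        rcases mem_iUnion.1 hx with ⟨n, hn⟩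
        by_cases h : n = 0
        · rw [if_pos h] at hn; exact Or.inl hn
        · rw [if_neg h] at hn; exact Or.inr hn
    rw [hrw]
    exact hunion _ fun n => by by_cases h : n = 0 <;> simp [h, h1, h2]
  have hempty : (∅ : Set I) ∈ 𝒮 := by simpa using hcompl _ huniv
  have hinter2 : ∀ S₁ ∈ 𝒮, ∀ S₂ ∈ 𝒮, S₁ ∩ S₂ ∈ 𝒮 := by
    intro S₁ h1 S₂ h2
    have e1 : S₁ ∩ S₂ = (S₁ᶜ ∪ S₂ᶜ)ᶜ := by rw [compl_union, compl_compl, compl_compl]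
    rw [e1]
    exact hcompl _ (hunion2 _ (hcompl _ h1) _ (hcompl _ h2))
  have hdiff𝒮 : ∀ S₁ ∈ 𝒮, ∀ S₂ ∈ 𝒮, S₁ \ S₂ ∈ 𝒮 := fun S₁ h1 S₂ h2 => by
    rw [diff_eq]; exact hinter2 _ h1 _ (hcompl _ h2)
  have hsd𝒮 : ∀ S₁ ∈ 𝒮, ∀ S₂ ∈ 𝒮, S₁ ∆ S₂ ∈ 𝒮 := fun S₁ h1 S₂ h2 => by
    rw [Set.symmDiff_def]; exact hunion2 _ (hdiff𝒮 _ h1 _ h2) _ (hdiff𝒮 _ h2 _ h1)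
  -- a.e. versions of the hypotheses
  have hcomplAe : ∀ S ∈ 𝒮, Ψ Sᶜ =ᵐ[volume] (Ψ S)ᶜ := fun S hS =>
    measure_symmDiff_eq_zero_iff.mp (hΨcompl S hS)
  have hunionAe : ∀ S₁ ∈ 𝒮, ∀ S₂ ∈ 𝒮, Ψ (S₁ ∪ S₂) =ᵐ[volume] ((Ψ S₁ ∪ Ψ S₂ : Set I)) := fun S₁ h1 S₂ h2 =>
    measure_symmDiff_eq_zero_iff.mp (hΨunion S₁ h1 S₂ h2)
  have hinterAe : ∀ S₁ ∈ 𝒮, ∀ S₂ ∈ 𝒮, Ψ (S₁ ∩ S₂) =ᵐ[volume] ((Ψ S₁ ∩ Ψ S₂ : Set I)) := by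
    intro S₁ h1 S₂ h2
    have h1c := hcompl _ h1; have h2c := hcompl _ h2
    have hu : S₁ᶜ ∪ S₂ᶜ ∈ 𝒮 := hunion2 _ h1c _ h2c
    have e1 : S₁ ∩ S₂ = (S₁ᶜ ∪ S₂ᶜ)ᶜ := by rw [compl_union, compl_compl, compl_compl]
    have e2 : ((Ψ S₁)ᶜ ∪ (Ψ S₂)ᶜ)ᶜ = Ψ S₁ ∩ Ψ S₂ := by
      rw [compl_union, compl_compl, compl_compl]
    rw [e1, ← e2]
    exact (hcomplAe _ hu).trans (ae_eq_set_compl_compl.mpr ((hunionAe _ h1c _ h2c).trans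
      (ae_eq_set_union (hcomplAe _ h1) (hcomplAe _ h2))))
  have hdiffAe : ∀ S₁ ∈ 𝒮, ∀ S₂ ∈ 𝒮, Ψ (S₁ \ S₂) =ᵐ[volume] ((Ψ S₁ \ Ψ S₂ : Set I)) := by
    intro S₁ h1 S₂ h2
    simp only [Set.diff_eq]
    exact (hinterAe _ h1 _ (hcompl _ h2)).trans
      (ae_eq_set_inter EventuallyEq.rfl (hcomplAe _ h2))
  have hsdAe : ∀ S₁ ∈ 𝒮, ∀ S₂ ∈ 𝒮, Ψ (S₁ ∆ S₂) =ᵐ[volume] ((Ψ S₁ ∆ Ψ S₂ : Set I)) := by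
    intro S₁ h1 S₂ h2
    simp only [Set.symmDiff_def, Set.sup_eq_union]
    exact (hunionAe _ (hdiff𝒮 _ h1 _ h2) _ (hdiff𝒮 _ h2 _ h1)).trans
      (ae_eq_set_union (hdiffAe _ h1 _ h2) (hdiffAe _ h2 _ h1))
  have hΨsymm : ∀ S₁ ∈ 𝒮, ∀ S₂ ∈ 𝒮, volume (Ψ S₁ ∆ Ψ S₂) = volume (S₁ ∆ S₂) := by
    intro S₁ h1 S₂ h2
    rw [← measure_congr (hsdAe S₁ h1 S₂ h2), hΨvol _ (hsd𝒮 _ h1 _ h2)]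
  have hΨempty : Ψ (∅ : Set I) =ᵐ[volume] (∅ : Set I) := by
    have h0 := hΨvol ∅ hempty
    rw [measure_empty] at h0
    exact ae_eq_empty.mpr h0
  have hΨuniv : Ψ (univ : Set I) =ᵐ[volume] (univ : Set I) := by
    have h1 : Ψ ((univ : Set I)ᶜ) =ᵐ[volume] (Ψ (univ : Set I))ᶜ := hcomplAe _ huniv
    rw [compl_univ] at h1
    have h2 : (Ψ (univ : Set I))ᶜ =ᵐ[volume] (∅ : Set I) := h1.symm.trans hΨempty
    have h3 := ae_eq_set_compl.mp h2
    exact h3.trans (Eventually.of_forall fun x => propext ⟨fun _ => trivial, fun _ h => h⟩)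
  have hAccMeas : ∀ (g : ℕ → Set I), (∀ n, MeasurableSet (g n)) → ∀ n,
      MeasurableSet (accumulate g n) := by
    intro g hg n
    rw [Set.accumulate_def]
    exact MeasurableSet.biUnion (to_countable _) fun k _ => hg k
  have hacc𝒮 : ∀ (f : ℕ → Set I), (∀ n, f n ∈ 𝒮) → ∀ n, accumulate f n ∈ 𝒮 := by
    intro f hf n
    induction n with
    | zero => rw [acc_zero']; exact hf 0
    | succ n ih => rw [acc_succ']; exact hunion2 _ ih _ (hf _)
  have haccAe : ∀ (f : ℕ → Set I), (∀ n, f n ∈ 𝒮) → ∀ n,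
      Ψ (accumulate f n) =ᵐ[volume] accumulate (fun k => Ψ (f k)) n := by
    intro f hf n
    induction n with
    | zero => rw [acc_zero', acc_zero']; exact EventuallyEq.rfl
    | succ n ih =>
      rw [acc_succ', acc_succ']
      exact (hunionAe _ (hacc𝒮 f hf n) _ (hf _)).trans (ae_eq_set_union ih EventuallyEq.rfl)
  have hΨiUnion : ∀ (f : ℕ → Set I), (∀ n, f n ∈ 𝒮) →
      Ψ (⋃ n, f n) =ᵐ[volume] ((⋃ n, Ψ (f n) : Set I)) := by
    intro f hf
    rw [← measure_symmDiff_eq_zero_iff]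
    have hT𝒮 : (⋃ n, f n) ∈ 𝒮 := hunion f hf
    have key : ∀ n, volume (Ψ (⋃ n, f n) ∆ (⋃ n, Ψ (f n))) ≤
        volume ((⋃ n, f n) \ accumulate f n) +
          volume ((⋃ n, Ψ (f n)) \ accumulate (fun k => Ψ (f k)) n) := by
      intro n
      have tri : Ψ (⋃ n, f n) ∆ (⋃ n, Ψ (f n)) ⊆
          (Ψ (⋃ n, f n) ∆ Ψ (accumulate f n)) ∪ (Ψ (accumulate f n) ∆ (⋃ n, Ψ (f n))) :=
        symmDiff_triangle _ _ _
      refine le_trans (le_trans (measure_mono tri) (measure_union_le _ _)) (add_le_add ?_ ?_)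
      · rw [hΨsymm _ hT𝒮 _ (hacc𝒮 f hf n),
          symmDiff_of_ge (Set.accumulate_subset_iUnion (s := f) n)]
      · have tri2 : Ψ (accumulate f n) ∆ (⋃ n, Ψ (f n)) ⊆
            (Ψ (accumulate f n) ∆ accumulate (fun k => Ψ (f k)) n) ∪
              (accumulate (fun k => Ψ (f k)) n ∆ (⋃ n, Ψ (f n))) := symmDiff_triangle _ _ _
        refine le_trans (le_trans (measure_mono tri2) (measure_union_le _ _)) ?_
        rw [measure_symmDiff_eq_zero_iff.mpr (haccAe f hf n), zero_add,
          symmDiff_of_le (Set.accumulate_subset_iUnion (s := fun k => Ψ (f k)) n)]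
    have hlim : ∀ (g : ℕ → Set I), (∀ n, MeasurableSet (g n)) →
        Tendsto (fun n => volume ((⋃ k, g k) \ accumulate g n)) atTop (𝓝 0) := by
      intro g hg
      have h1 : Tendsto (fun n => volume ((⋃ k, g k) \ accumulate g n)) atTop
          (𝓝 (volume (⋂ n, (⋃ k, g k) \ accumulate g n))) := by
        apply tendsto_measure_iInter_atTop
        · intro n
          exact ((MeasurableSet.iUnion hg).diff (hAccMeas g hg n)).nullMeasurableSet
        · intro m n hmn
          exact diff_subset_diff_right (Set.monotone_accumulate hmn)
        · exact ⟨0, measure_ne_top _ _⟩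
      have h2 : (⋂ n, (⋃ k, g k) \ accumulate g n) = (∅ : Set I) := by
        rw [← Set.diff_iUnion, Set.iUnion_accumulate, diff_self]
      rwa [h2, measure_empty] at h1
    have hsum : Tendsto (fun n => volume ((⋃ n, f n) \ accumulate f n) +
        volume ((⋃ n, Ψ (f n)) \ accumulate (fun k => Ψ (f k)) n)) atTop (𝓝 0) := by
      simpa using (hlim f fun n => hmeas _ (hf n)).add (hlim _ fun n => hΨmeas _ (hf n))
    have hle := ge_of_tendsto' hsum key
    exact le_antisymm hle (by positivity)
  -- the monotone family realizing the intervals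
  set T' : ℚ → Set I := fun q => {x : I | (x : ℝ) ≤ (q : ℝ)} with hT'def
  have hT'meas : ∀ q, MeasurableSet (T' q) := fun q => measurable_subtype_coe measurableSet_Iic
  have hT'mono : ∀ {q₁ q₂ : ℚ}, q₁ ≤ q₂ → T' q₁ ⊆ T' q₂ := by
    intro q₁ q₂ h x hx
    have hx' : (x : ℝ) ≤ (q₁ : ℝ) := hx
    show (x : ℝ) ≤ (q₂ : ℝ)
    exact le_trans hx' (by exact_mod_cast h)
  choose c hc𝒮 hcsd using fun q : ℚ => hΨsurj (T' q) (hT'meas q)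
  have hcae : ∀ q, Ψ (c q) =ᵐ[volume] T' q := fun q => measure_symmDiff_eq_zero_iff.mp (hcsd q)
  set e : ℕ ≃ ℚ := (Denumerable.eqv ℚ).symm with hedef
  set A : ℚ → Set I := fun q =>
    (⋃ n : ℕ, if (e n : ℚ) ≤ q then c (e n) else ∅) ∪ (if (1:ℚ) ≤ q then univ else ∅)
    with hAdef
  have hA𝒮 : ∀ q, A q ∈ 𝒮 := by
    intro q
    refine hunion2 _ (hunion _ fun n => ?_) _ ?_
    · by_cases h : (e n : ℚ) ≤ q
      · rw [if_pos h]; exact hc𝒮 _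
      · rw [if_neg h]; exact hempty
    · by_cases h : (1:ℚ) ≤ q
      · rw [if_pos h]; exact huniv
      · rw [if_neg h]; exact hempty
  have hAmeas : ∀ q, MeasurableSet (A q) := fun q => hmeas _ (hA𝒮 q)
  have hAmono : ∀ {q₁ q₂ : ℚ}, q₁ ≤ q₂ → A q₁ ⊆ A q₂ := by
    intro q₁ q₂ h
    refine union_subset_union (iUnion_mono fun n => ?_) ?_
    · by_cases hn : (e n : ℚ) ≤ q₁
      · rw [if_pos hn, if_pos (hn.trans h)]
      · rw [if_neg hn]; exact empty_subset _
    · by_cases h1 : (1:ℚ) ≤ q₁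
      · rw [if_pos h1, if_pos (h1.trans h)]
      · rw [if_neg h1]; exact empty_subset _
  have hA1 : ∀ x : I, x ∈ A 1 := fun x => Or.inr (by rw [if_pos le_rfl]; trivial)
  have hΨA : ∀ q : ℚ, Ψ (A q) =ᵐ[volume] T' q := by
    intro q
    by_cases h1 : (1:ℚ) ≤ q
    · have hAq : A q = univ := by rw [hAdef]; simp only [if_pos h1, union_univ]
      have hTq : T' q = univ := by
        ext x
        simp only [hT'def, mem_setOf_eq, mem_univ, iff_true]
        exact le_trans x.2.2 (by exact_mod_cast h1)
      rw [hAq, hTq]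
      exact hΨuniv
    · have hAq : A q = ⋃ n : ℕ, (if (e n : ℚ) ≤ q then c (e n) else ∅) := by
        rw [hAdef]; simp only [if_neg h1, union_empty]
      have e2 : (⋃ n : ℕ, (if (e n : ℚ) ≤ q then T' (e n) else ∅)) = T' q := by
        apply Subset.antisymm
        · refine iUnion_subset fun n => ?_
          by_cases h : (e n : ℚ) ≤ q
          · rw [if_pos h]; exact hT'mono h
          · rw [if_neg h]; exact empty_subset _
        · intro x hx
          refine mem_iUnion.2 ⟨e.symm q, ?_⟩
          rw [e.apply_symm_apply, if_pos le_rfl]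
          exact hx
      rw [hAq, ← e2]
      refine (hΨiUnion _ fun n => ?_).trans (aeeq_iUnion fun n => ?_)
      · by_cases h : (e n : ℚ) ≤ q
        · rw [if_pos h]; exact hc𝒮 _
        · rw [if_neg h]; exact hempty
      · by_cases h : (e n : ℚ) ≤ q
        · rw [if_pos h, if_pos h]; exact hcae _
        · rw [if_neg h, if_neg h]; exact hΨempty
  -- the function h
  set Qx : I → Set ℝ := fun x => (Rat.cast : ℚ → ℝ) '' {q : ℚ | 0 ≤ q ∧ q ≤ 1 ∧ x ∈ A q}
    with hQxdef
  have hQx1 : ∀ x, (1 : ℝ) ∈ Qx x := fun x => ⟨1, ⟨by norm_num, le_rfl, hA1 x⟩, by norm_num⟩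
  have hne : ∀ x, (Qx x).Nonempty := fun x => ⟨1, hQx1 x⟩
  have hbdd : ∀ x, BddBelow (Qx x) := by
    intro x
    refine ⟨0, ?_⟩
    rintro r ⟨q, hq, rfl⟩
    exact_mod_cast hq.1
  have hg0 : ∀ x, 0 ≤ sInf (Qx x) := by
    intro x
    refine le_csInf (hne x) ?_
    rintro r ⟨q, hq, rfl⟩
    exact_mod_cast hq.1
  have hg1 : ∀ x, sInf (Qx x) ≤ 1 := fun x => csInf_le (hbdd x) (hQx1 x)
  set h : I → I := fun x => ⟨sInf (Qx x), hg0 x, hg1 x⟩ with hhdef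
  have hpre : ∀ a : I, h ⁻¹' (Iic a) =
      ⋂ (q : ℚ), ⋂ (_ : (a : ℝ) < (q : ℝ) ∧ (q : ℝ) ≤ 1), A q := by
    intro a
    ext x
    simp only [mem_preimage, mem_Iic, mem_iInter]
    constructor
    · rintro hx q ⟨haq, hq1⟩
      have hgx : sInf (Qx x) ≤ (a : ℝ) := Subtype.coe_le_coe.mpr hx
      obtain ⟨r, ⟨q', hq', rfl⟩, hrq⟩ := exists_lt_of_csInf_lt (hne x) (lt_of_le_of_lt hgx haq)
      exact hAmono (le_of_lt (by exact_mod_cast hrq)) hq'.2.2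
    · intro hx
      rcases lt_or_eq_of_le (a.2.2 : (a : ℝ) ≤ 1) with ha | ha
      · refine Subtype.coe_le_coe.mp (le_of_forall_pos_le_add fun ε hε => ?_)
        obtain ⟨q, hq1, hq2⟩ := exists_rat_btwn (lt_min ha (lt_add_of_pos_right (a : ℝ) hε))
        have hqle1 : (q : ℝ) ≤ 1 := le_of_lt (lt_of_lt_of_le hq2 (min_le_left _ _))
        have hq0 : (0 : ℚ) ≤ q := by
          have := le_trans a.2.1 (le_of_lt hq1)
          exact_mod_cast this
        have hle : sInf (Qx x) ≤ (q : ℝ) :=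
          csInf_le (hbdd x) ⟨q, ⟨hq0, by exact_mod_cast hqle1, hx q ⟨hq1, hqle1⟩⟩, rfl⟩
        exact le_trans hle (le_of_lt (lt_of_lt_of_le hq2 (min_le_right _ _)))
      · exact Subtype.coe_le_coe.mp (le_of_le_of_eq (hg1 x) ha.symm)
  have hmeasH : Measurable h := by
    apply measurable_of_Iic
    intro a
    rw [hpre a]
    exact MeasurableSet.iInter fun q => MeasurableSet.iInter fun _ => hAmeas q
  have hIic1 : Iic (1 : I) = (univ : Set I) := by
    ext x
    simp only [mem_Iic, mem_univ, iff_true]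
    exact Subtype.coe_le_coe.mp (by simpa using x.2.2)
  have hK : ∀ S ∈ 𝒮, ∀ B : Set I, MeasurableSet B →
      volume (S ∩ h ⁻¹' B) = volume (Ψ S ∩ B) := by
    intro S hS B hB
    have hSm := hmeas S hS
    have hΨSm := hΨmeas S hS
    haveI hμ1fin : IsFiniteMeasure ((volume.restrict S).map h) := by
      constructor
      rw [Measure.map_apply hmeasH MeasurableSet.univ]
      exact lt_of_le_of_lt (measure_mono (subset_univ _)) (measure_lt_top _ univ)
    have hext : (volume.restrict S).map h = volume.restrict (Ψ S) := by
      refine Measure.ext_of_Iic _ _ fun a => ?_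
      rw [Measure.map_apply hmeasH measurableSet_Iic,
        Measure.restrict_apply (hmeasH measurableSet_Iic),
        Measure.restrict_apply measurableSet_Iic]
      -- goal : volume (h ⁻¹' Iic a ∩ S) = volume (Iic a ∩ Ψ S)
      rcases lt_or_eq_of_le (a.2.2 : (a : ℝ) ≤ 1) with ha | ha
      · -- a < 1
        haveI hPne : Nonempty {q : ℚ // (a : ℝ) < (q : ℝ) ∧ (q : ℝ) ≤ 1} := by
          obtain ⟨q, hq1, hq2⟩ := exists_rat_btwn ha
          exact ⟨⟨q, hq1, le_of_lt hq2⟩⟩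
        have hrw1 : h ⁻¹' (Iic a) = ⋂ p : {q : ℚ // (a : ℝ) < (q : ℝ) ∧ (q : ℝ) ≤ 1}, A p.1 := by
          rw [hpre a]
          ext x
          simp only [mem_iInter, Subtype.forall]
        have hmin : ∀ p₁ p₂ : {q : ℚ // (a : ℝ) < (q : ℝ) ∧ (q : ℝ) ≤ 1},
            ((a : ℝ) < ((min p₁.1 p₂.1 : ℚ) : ℝ) ∧ ((min p₁.1 p₂.1 : ℚ) : ℝ) ≤ 1) := by
          intro p₁ p₂
          constructor
          · rw [Rat.cast_min]
            exact lt_min p₁.2.1 p₂.2.1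
          · rw [Rat.cast_min]
            exact le_trans (min_le_left _ _) p₁.2.2
        have hd1 : Directed (· ⊇ ·)
            (fun p : {q : ℚ // (a : ℝ) < (q : ℝ) ∧ (q : ℝ) ≤ 1} => S ∩ A p.1) := by
          intro p₁ p₂
          exact ⟨⟨min p₁.1 p₂.1, hmin p₁ p₂⟩,
            inter_subset_inter_right _ (hAmono (min_le_left _ _)),
            inter_subset_inter_right _ (hAmono (min_le_right _ _))⟩
        have hd2 : Directed (· ⊇ ·)
            (fun p : {q : ℚ // (a : ℝ) < (q : ℝ) ∧ (q : ℝ) ≤ 1} => Ψ S ∩ T' p.1) := by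
          intro p₁ p₂
          exact ⟨⟨min p₁.1 p₂.1, hmin p₁ p₂⟩,
            inter_subset_inter_right _ (hT'mono (min_le_left _ _)),
            inter_subset_inter_right _ (hT'mono (min_le_right _ _))⟩
        have hterm : ∀ p : {q : ℚ // (a : ℝ) < (q : ℝ) ∧ (q : ℝ) ≤ 1},
            volume (S ∩ A p.1) = volume (Ψ S ∩ T' p.1) := by
          intro p
          rw [← hΨvol _ (hinter2 _ hS _ (hA𝒮 p.1)),
            measure_congr ((hinterAe _ hS _ (hA𝒮 p.1)).trans
              (ae_eq_set_inter EventuallyEq.rfl (hΨA p.1)))]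
        have hTinter : (⋂ p : {q : ℚ // (a : ℝ) < (q : ℝ) ∧ (q : ℝ) ≤ 1}, T' p.1) = Iic a := by
          ext x
          simp only [mem_iInter, mem_Iic, Subtype.forall]
          constructor
          · intro hx
            by_contra hc
            have hax : (a : ℝ) < (x : ℝ) := not_le.mp fun hle => hc (Subtype.coe_le_coe.mp hle)
            obtain ⟨q, hq1, hq2⟩ := exists_rat_btwn hax
            have hmem : (x : ℝ) ≤ (q : ℝ) := hx q ⟨hq1, le_trans (le_of_lt hq2) x.2.2⟩
            exact absurd hmem (not_le.mpr hq2)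
          · intro hx q hq
            show (x : ℝ) ≤ (q : ℝ)
            exact le_trans (Subtype.coe_le_coe.mpr hx) (le_of_lt hq.1)
        calc volume (h ⁻¹' Iic a ∩ S)
            = volume (⋂ p : {q : ℚ // (a : ℝ) < (q : ℝ) ∧ (q : ℝ) ≤ 1}, S ∩ A p.1) := by
              rw [hrw1, inter_comm, inter_iInter]
          _ = ⨅ p : {q : ℚ // (a : ℝ) < (q : ℝ) ∧ (q : ℝ) ≤ 1}, volume (S ∩ A p.1) :=
              Directed.measure_iInter
                (fun p => (hSm.inter (hAmeas p.1)).nullMeasurableSet) hd1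
                ⟨Classical.arbitrary _, measure_ne_top _ _⟩
          _ = ⨅ p : {q : ℚ // (a : ℝ) < (q : ℝ) ∧ (q : ℝ) ≤ 1}, volume (Ψ S ∩ T' p.1) :=
              iInf_congr hterm
          _ = volume (⋂ p : {q : ℚ // (a : ℝ) < (q : ℝ) ∧ (q : ℝ) ≤ 1}, Ψ S ∩ T' p.1) :=
              (Directed.measure_iInter
                (fun (p : {q : ℚ // (a : ℝ) < (q : ℝ) ∧ (q : ℝ) ≤ 1}) => (hΨSm.inter (hT'meas p.1)).nullMeasurableSet) hd2
                ⟨Classical.arbitrary _, measure_ne_top _ _⟩).symm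
          _ = volume (Iic a ∩ Ψ S) := by rw [← inter_iInter, hTinter, inter_comm]
      · -- a = 1
        have ha1 : a = 1 := Subtype.ext (by simpa using ha)
        rw [ha1, hIic1, preimage_univ, univ_inter, univ_inter, hΨvol S hS]
    calc volume (S ∩ h ⁻¹' B) = ((volume.restrict S).map h) B := by
          rw [Measure.map_apply hmeasH hB, Measure.restrict_apply (hmeasH hB), inter_comm]
      _ = (volume.restrict (Ψ S)) B := by rw [hext]
      _ = volume (Ψ S ∩ B) := by rw [Measure.restrict_apply hB, inter_comm]
  have hMP : MeasurePreserving h volume volume := by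
    refine ⟨hmeasH, ?_⟩
    refine Measure.ext fun B hB => ?_
    rw [Measure.map_apply hmeasH hB]
    have hk := hK univ huniv B hB
    rw [univ_inter] at hk
    rw [hk, measure_congr (ae_eq_set_inter hΨuniv (EventuallyEq.rfl (f := B))), univ_inter]
  have hprop : ∀ B : Set I, MeasurableSet B → ∀ S ∈ 𝒮, volume (Ψ S ∆ B) = 0 →
      volume (S ∆ (h ⁻¹' B)) = 0 := by
    intro B hB S hS hsd
    have h1 : volume (S \ h ⁻¹' B) = 0 := by
      have e1 : S \ h ⁻¹' B = S ∩ h ⁻¹' Bᶜ := by rw [preimage_compl, diff_eq]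
      rw [e1, hK S hS Bᶜ hB.compl]
      refine measure_mono_null ?_ hsd
      intro x hx
      rw [Set.mem_symmDiff]
      exact Or.inl ⟨hx.1, hx.2⟩
    have h2 : volume (h ⁻¹' B \ S) = 0 := by
      have e2 : h ⁻¹' B \ S = Sᶜ ∩ h ⁻¹' B := by rw [diff_eq, inter_comm]
      rw [e2, hK Sᶜ (hcompl S hS) B hB,
        measure_congr (ae_eq_set_inter (hcomplAe S hS) (EventuallyEq.rfl (f := B)))]
      refine measure_mono_null ?_ hsd
      intro x hx
      rw [Set.mem_symmDiff]
      exact Or.inr ⟨hx.2, hx.1⟩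
    rw [Set.symmDiff_def]
    exact measure_union_null h1 h2
  refine ⟨h, hMP, hprop, ?_⟩
  intro h' _ hprop'
  have hsame : ∀ q : ℚ, h' ⁻¹' (T' q) =ᵐ[volume] h ⁻¹' (T' q) := by
    intro q
    have hc1 := hprop' (T' q) (hT'meas q) (c q) (hc𝒮 q) (hcsd q)
    have hc2 := hprop (T' q) (hT'meas q) (c q) (hc𝒮 q) (hcsd q)
    exact (measure_symmDiff_eq_zero_iff.mp hc1).symm.trans (measure_symmDiff_eq_zero_iff.mp hc2)
  have hN : volume (⋃ q : ℚ, (h' ⁻¹' (T' q)) ∆ (h ⁻¹' (T' q))) = 0 :=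
    measure_iUnion_null fun q => measure_symmDiff_eq_zero_iff.mpr (hsame q)
  have hsub : {x : I | ¬ h' x = h x} ⊆ ⋃ q : ℚ, (h' ⁻¹' (T' q)) ∆ (h ⁻¹' (T' q)) := by
    intro x hx
    have hne' : ((h' x : ℝ)) ≠ ((h x : ℝ)) := fun hc => hx (Subtype.ext hc)
    rcases lt_or_gt_of_ne hne' with hlt | hlt
    · obtain ⟨q, hq1, hq2⟩ := exists_rat_btwn hlt
      refine mem_iUnion.2 ⟨q, ?_⟩
      rw [Set.mem_symmDiff]
      exact Or.inl ⟨le_of_lt hq1, fun hc => absurd (hc : ((h x : ℝ)) ≤ (q : ℝ)) (not_le.mpr hq2)⟩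
    · obtain ⟨q, hq1, hq2⟩ := exists_rat_btwn hlt
      refine mem_iUnion.2 ⟨q, ?_⟩
      rw [Set.mem_symmDiff]
      exact Or.inr ⟨le_of_lt hq1, fun hc => absurd (hc : ((h' x : ℝ)) ≤ (q : ℝ)) (not_le.mpr hq2)⟩
  rw [EventuallyEq, ae_iff]
  exact measure_mono_null hsub hN
end
end

section
/- Let A = [a_{ij}] be a k × ℓ transformation matrix with k ≥ 2 and ℓ ≥ 2, and let C and D be copulas. Then ‖[A](C) − [A](D)‖_S ≤ r‖C − D‖_S, where r² = max( Σ_{j=1}^ℓ Σ_{i=1}^k a_{ij}² (q_j − q_{j−1})/(p_i − p_{i−1}), Σ_{j=1}^ℓ Σ_{i=1}^k a_{ij}² (p_i − p_{i−1})/(q_j − q_{j−1}) ), and moreover r < 1. -/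
open Set

noncomputable section

/-- A (bivariate) copula, as a function `C : ℝ × ℝ → ℝ` whose defining properties are imposed
on the unit square `[0,1]²`: `C(u,0) = C(0,v) = 0`, `C(u,1) = u`, `C(1,v) = v`, and
2-increasingness. -/
def IsCopula (C : ℝ → ℝ → ℝ) : Prop :=
  (∀ u ∈ Icc (0:ℝ) 1, C u 0 = 0) ∧
  (∀ v ∈ Icc (0:ℝ) 1, C 0 v = 0) ∧
  (∀ u ∈ Icc (0:ℝ) 1, C u 1 = u) ∧
  (∀ v ∈ Icc (0:ℝ) 1, C 1 v = v) ∧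
  (∀ u₁ u₂ v₁ v₂ : ℝ, u₁ ∈ Icc (0:ℝ) 1 → u₂ ∈ Icc (0:ℝ) 1 → v₁ ∈ Icc (0:ℝ) 1 →
    v₂ ∈ Icc (0:ℝ) 1 → u₁ ≤ u₂ → v₁ ≤ v₂ →
    0 ≤ C u₂ v₂ - C u₂ v₁ - C u₁ v₂ + C u₁ v₁)

/-- A `k × ℓ` transformation matrix: nonnegative entries summing to `1`, every row and every
column containing a nonzero entry.  (The index `i : Fin k` is the column index and
`j : Fin ℓ` is the row index.) -/
def IsTransfMatrix {k ℓ : ℕ} (a : Fin k → Fin ℓ → ℝ) : Prop :=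
  (∀ i j, 0 ≤ a i j) ∧ (∑ i, ∑ j, a i j = 1) ∧
  (∀ j, ∃ i, a i j ≠ 0) ∧ (∀ i, ∃ j, a i j ≠ 0)

/-- `pP a m` is `p_m`: the sum of the entries in the first `m` columns of `a`. -/
def pP {k ℓ : ℕ} (a : Fin k → Fin ℓ → ℝ) (m : ℕ) : ℝ :=
  ∑ i : Fin k, if (i : ℕ) < m then ∑ j, a i j else 0

/-- `qQ a m` is `q_m`: the sum of the entries in the first `m` rows of `a`. -/
def qQ {k ℓ : ℕ} (a : Fin k → Fin ℓ → ℝ) (m : ℕ) : ℝ :=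
  ∑ j : Fin ℓ, if (j : ℕ) < m then ∑ i, a i j else 0

/-- `F_i(u) = min(1, (u − p_{i−1})/Δp_i) · 𝟙_{(p_{i−1},∞)}(u)`, the uniform distribution
function on `[p_{i−1}, p_i]` (here `i : Fin k` denotes the `(i+1)`-st column, so
`p_{i−1} = pP a i` and `p_i = pP a (i+1)`). -/
def Fdist {k ℓ : ℕ} (a : Fin k → Fin ℓ → ℝ) (i : Fin k) (u : ℝ) : ℝ :=
  if pP a (i : ℕ) < u then min 1 ((u - pP a (i : ℕ)) / (pP a ((i : ℕ) + 1) - pP a (i : ℕ)))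
  else 0

/-- `G_j(v) = min(1, (v − q_{j−1})/Δq_j) · 𝟙_{(q_{j−1},∞)}(v)`. -/
def Gdist {k ℓ : ℕ} (a : Fin k → Fin ℓ → ℝ) (j : Fin ℓ) (v : ℝ) : ℝ :=
  if qQ a (j : ℕ) < v then min 1 ((v - qQ a (j : ℕ)) / (qQ a ((j : ℕ) + 1) - qQ a (j : ℕ)))
  else 0

/-- The patching operator `[A]`: `[A](C)(u,v) = Σ_i Σ_j a_{ij} C(F_i(u), G_j(v))`. -/
def patch {k ℓ : ℕ} (a : Fin k → Fin ℓ → ℝ) (C : ℝ → ℝ → ℝ) : ℝ → ℝ → ℝ :=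
  fun u v => ∑ i, ∑ j, a i j * C (Fdist a i u) (Gdist a j v)

/-- First partial derivative `∂₁C` (defined via `deriv`, which agrees a.e. with the
almost-everywhere existing partial derivative of a copula). -/
def d1 (C : ℝ → ℝ → ℝ) (u v : ℝ) : ℝ := deriv (fun x => C x v) u

/-- Second partial derivative `∂₂C`. -/
def d2 (C : ℝ → ℝ → ℝ) (u v : ℝ) : ℝ := deriv (fun y => C u y) v

/-- `‖C‖₁² = ∫₀¹∫₀¹ |∂₁C(u,v)|² du dv`. -/
def sobSq1 (C : ℝ → ℝ → ℝ) : ℝ := ∫ v in (0:ℝ)..1, ∫ u in (0:ℝ)..1, (d1 C u v) ^ 2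

/-- `‖C‖₂² = ∫₀¹∫₀¹ |∂₂C(u,v)|² du dv`. -/
def sobSq2 (C : ℝ → ℝ → ℝ) : ℝ := ∫ v in (0:ℝ)..1, ∫ u in (0:ℝ)..1, (d2 C u v) ^ 2

/-- The modified Sobolev norm `‖C‖_S = (‖C‖₁² + ‖C‖₂²)^{1/2}`. -/
def sobNorm (C : ℝ → ℝ → ℝ) : ℝ := Real.sqrt (sobSq1 C + sobSq2 C)

/-- Pointwise difference of two bivariate functions. -/
def csub (C D : ℝ → ℝ → ℝ) : ℝ → ℝ → ℝ := fun u v => C u v - D u v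

/-- The `*`-product of copulas: `(C*D)(u,v) = ∫₀¹ ∂₂C(u,t) ∂₁D(t,v) dt`. -/
def cstar (C D : ℝ → ℝ → ℝ) : ℝ → ℝ → ℝ :=
  fun u v => ∫ t in (0:ℝ)..1, d2 C u t * d1 D t v

/-- Transpose of a copula: `C^t(u,v) = C(v,u)`. -/
def ctransp (C : ℝ → ℝ → ℝ) : ℝ → ℝ → ℝ := fun u v => C v u

/-- `C` is left invertible: `C^t * C = M` on `[0,1]²`, where `M(u,v) = min(u,v)`. -/
def LeftInvertibleC (C : ℝ → ℝ → ℝ) : Prop :=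
  ∀ u ∈ Icc (0:ℝ) 1, ∀ v ∈ Icc (0:ℝ) 1, cstar (ctransp C) C u v = min u v

/-- `C` is right invertible: `C * C^t = M` on `[0,1]²`. -/
def RightInvertibleC (C : ℝ → ℝ → ℝ) : Prop :=
  ∀ u ∈ Icc (0:ℝ) 1, ∀ v ∈ Icc (0:ℝ) 1, cstar C (ctransp C) u v = min u v

/-! On the rectangle `[p_{i-1}, p_i] × [q_{j-1}, q_j]` the difference `[A](C) − [A](D)` equals
`a_{ij} E ∘ φ_{ij}`, where `E = C − D` vanishes on the boundary of `[0,1]²` and `φ_{ij}` is the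
affine bijection of the rectangle onto the unit square: every other term of the patch has a
coordinate `F_{i'}(u)` or `G_{j'}(v)` in `{0, 1}`. So `∂₁` picks up the factor `a_{ij}/Δp_i` there,
and changing variables rectangle by rectangle gives `‖[A](C) − [A](D)‖₁² = r₁² ‖C − D‖₁²` with
`r₁² = Σ a_{ij}² Δq_j/Δp_i`, and likewise for `∂₂`. Since `a_{ij} ≤ Δp_i`, `r₁² ≤ Σ_j Δq_j²`, which
is `< 1` because the `ℓ ≥ 2` positive numbers `Δq_j` sum to `1`. -/

open MeasureTheory intervalIntegral Function
open scoped NNReal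

lemma intervalIntegrable_comp_rescale {φ : ℝ → ℝ} (hφ : IntervalIntegrable φ volume 0 1)
    (a b : ℝ) :
    IntervalIntegrable (fun u => φ ((u - a) / (b - a))) volume a b := by
  have h := (hφ.comp_mul_left (c := (b - a)⁻¹)).comp_sub_right a
  simp only [zero_div, zero_add, one_div, inv_inv, sub_add_cancel] at h
  simpa only [div_eq_inv_mul] using h

lemma integral_comp_rescale (φ : ℝ → ℝ) {a b : ℝ} (hab : a < b) :
    ∫ u in a..b, φ ((u - a) / (b - a)) = (b - a) * ∫ s in (0:ℝ)..1, φ s := by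
  have hba : b - a ≠ 0 := (sub_pos.2 hab).ne'
  rw [integral_comp_sub_right (fun x => φ (x / (b - a))), integral_comp_div _ hba, sub_self,
    zero_div, div_self hba, smul_eq_mul]

lemma intervalIntegrable_of_abs_le {φ : ℝ → ℝ} (hφ : Measurable φ) {M : ℝ}
    (hφM : ∀ s, |φ s| ≤ M) (a b : ℝ) : IntervalIntegrable φ volume a b :=
  intervalIntegrable_const.mono_fun' hφ.aestronglyMeasurable (ae_of_all _ hφM)

lemma integral_eq_sum_of_eqOn_rescale {n : ℕ} {P : ℕ → ℝ} (hP : ∀ i : Fin n, P i < P (i + 1))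
    {φ : ℝ → ℝ} (hφ : IntervalIntegrable φ volume 0 1) (c : Fin n → ℝ) {f : ℝ → ℝ}
    (hf : ∀ i : Fin n, ∀ u ∈ Ioo (P i) (P (i + 1)),
      f u = c i * φ ((u - P i) / (P (i + 1) - P i))) :
    ∫ u in P 0..P n, f u = (∑ i, c i * (P (i + 1) - P i)) * ∫ s in (0:ℝ)..1, φ s := by
  have piece (i : Fin n) : IntervalIntegrable f volume (P i) (P (i + 1)) ∧
      ∫ u in P i..P (i + 1), f u = c i * (P (i + 1) - P i) * ∫ s in (0:ℝ)..1, φ s := by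
    have hEq : EqOn f (fun u => c i * φ ((u - P i) / (P (i + 1) - P i))) (Ioo (P i) (P (i + 1))) :=
      hf i
    refine ⟨((intervalIntegrable_comp_rescale hφ (P i) (P (i + 1))).const_mul (c i)).congr_uIoo ?_, ?_⟩
    · rw [uIoo_of_le (hP i).le]; exact hEq.symm
    · rw [integral_congr_Ioo_of_le (hP i).le hEq, intervalIntegral.integral_const_mul,
        integral_comp_rescale φ (hP i), mul_assoc]
  rw [← sum_integral_adjacent_intervals fun i hi => (piece ⟨i, hi⟩).1,
    ← Fin.sum_univ_eq_sum_range (fun i => ∫ u in P i..P (i + 1), f u), Finset.sum_mul]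
  exact Finset.sum_congr rfl fun i _ => (piece i).2

lemma integral_integral_sq_eq_of_eqOn_rescale {k ℓ : ℕ} {P Q : ℕ → ℝ}
    (hP : ∀ i : Fin k, P i < P (i + 1)) (hQ : ∀ j : Fin ℓ, Q j < Q (j + 1))
    {g : ℝ → ℝ → ℝ} (hg : Measurable (uncurry g)) {M : ℝ} (hgM : ∀ s t, |g s t| ≤ M)
    (c : Fin k → Fin ℓ → ℝ) {f : ℝ → ℝ → ℝ}
    (hf : ∀ (i : Fin k) (j : Fin ℓ), ∀ u ∈ Ioo (P i) (P (i + 1)), ∀ v ∈ Ioo (Q j) (Q (j + 1)),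
      f u v = c i j * g ((u - P i) / (P (i + 1) - P i)) ((v - Q j) / (Q (j + 1) - Q j))) :
    ∫ v in Q 0..Q ℓ, ∫ u in P 0..P k, f u v ^ 2 =
      (∑ j, ∑ i, c i j ^ 2 * (P (i + 1) - P i) * (Q (j + 1) - Q j)) *
        ∫ t in (0:ℝ)..1, ∫ s in (0:ℝ)..1, g s t ^ 2 := by
  have hg2 : Measurable (uncurry fun s t => g s t ^ 2) := hg.pow_const 2
  have hg2M (s t : ℝ) : |g s t ^ 2| ≤ M ^ 2 := by
    rw [abs_pow]
    exact pow_le_pow_left₀ (abs_nonneg _) (hgM s t) 2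
  set H : ℝ → ℝ := fun t => ∫ s in (0:ℝ)..1, g s t ^ 2
  have hH : IntervalIntegrable H volume 0 1 := by
    refine intervalIntegrable_of_abs_le ?_ (M := M ^ 2) (fun t => ?_) 0 1
    · simp only [H, integral_of_le zero_le_one]
      exact (StronglyMeasurable.integral_prod_right (f := fun t s => g s t ^ 2)
        (hg2.comp measurable_swap).stronglyMeasurable).measurable
    · simpa using norm_integral_le_of_norm_le_const (a := 0) (b := 1)
        fun s _ => (Real.norm_eq_abs _).trans_le (hg2M s t)
  have inner (j : Fin ℓ) (v : ℝ) (hv : v ∈ Ioo (Q j) (Q (j + 1))) :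
      ∫ u in P 0..P k, f u v ^ 2 =
        (∑ i, c i j ^ 2 * (P (i + 1) - P i)) * H ((v - Q j) / (Q (j + 1) - Q j)) :=
    integral_eq_sum_of_eqOn_rescale hP
      (intervalIntegrable_of_abs_le (hg2.comp measurable_prodMk_right) (fun s => hg2M s _) 0 1)
      (fun i => c i j ^ 2) fun i u hu => by simp [hf i j u hu v hv, mul_pow]
  rw [integral_eq_sum_of_eqOn_rescale hQ hH _ inner]
  congr 1
  exact Finset.sum_congr rfl fun j _ => Finset.sum_mul ..

lemma sum_sq_lt_one {ι : Type*} [Fintype ι] {x : ι → ℝ} (hx : ∀ i, 0 < x i)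
    (hsum : ∑ i, x i = 1) (hι : 1 < Fintype.card ι) : ∑ i, x i ^ 2 < 1 := by
  have hlt (i : ι) : x i < 1 := by
    obtain ⟨j, hji⟩ := Fintype.exists_ne_of_one_lt_card hι i
    exact hsum ▸ Finset.single_lt_sum hji (Finset.mem_univ i) (Finset.mem_univ j) (hx j)
      fun l _ _ => (hx l).le
  calc ∑ i, x i ^ 2 < ∑ i, x i :=
        Finset.sum_lt_sum_of_nonempty
          (Finset.univ_nonempty_iff.2 (Fintype.card_pos_iff.1 (by omega)))
          fun i _ => by nlinarith [hx i, hlt i]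
    _ = 1 := hsum

section TransfMatrix

variable {k ℓ : ℕ} {a : Fin k → Fin ℓ → ℝ}

lemma IsTransfMatrix.swap (ha : IsTransfMatrix a) : IsTransfMatrix (swap a) :=
  ⟨fun j i => ha.1 i j, by rw [Finset.sum_comm]; exact ha.2.1, ha.2.2.2, ha.2.2.1⟩

lemma pP_zero : pP a 0 = 0 := by simp [pP]

lemma IsTransfMatrix.pP_eq_one (ha : IsTransfMatrix a) : pP a k = 1 := by
  simpa [pP] using ha.2.1

lemma pP_succ_sub (i : Fin k) : pP a (i + 1) - pP a i = ∑ j, a i j := by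
  rw [pP, pP, ← Finset.sum_sub_distrib, Finset.sum_eq_single i]
  · simp
  · intro i' _ hi'
    have : (i' : ℕ) ≠ i := Fin.val_ne_of_ne hi'
    split_ifs <;> first | omega | ring
  · simp

lemma IsTransfMatrix.pP_mono (ha : IsTransfMatrix a) : Monotone (pP a) :=
  monotone_nat_of_le_succ fun m => Finset.sum_le_sum fun i _ => by
    split_ifs <;> first | exact le_rfl | exact Finset.sum_nonneg fun j _ => ha.1 i j | omega

lemma IsTransfMatrix.le_pP_succ_sub (ha : IsTransfMatrix a) (i : Fin k) (j : Fin ℓ) :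
    a i j ≤ pP a (i + 1) - pP a i :=
  pP_succ_sub i ▸ Finset.single_le_sum (fun j' _ => ha.1 i j') (Finset.mem_univ j)

lemma IsTransfMatrix.pP_lt_succ (ha : IsTransfMatrix a) (i : Fin k) : pP a i < pP a (i + 1) := by
  obtain ⟨j, hj⟩ := ha.2.2.2 i
  linarith [(ha.1 i j).lt_of_ne' hj, ha.le_pP_succ_sub i j]

-- `qQ a` and `Gdist a` are definitionally `pP (swap a)` and `Fdist (swap a)`: every statement
-- about rows is the transposed statement about columns.
lemma qQ_zero : qQ a 0 = 0 := pP_zero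

lemma IsTransfMatrix.qQ_eq_one (ha : IsTransfMatrix a) : qQ a ℓ = 1 := ha.swap.pP_eq_one

lemma qQ_succ_sub (j : Fin ℓ) : qQ a (j + 1) - qQ a j = ∑ i, a i j := pP_succ_sub (a := swap a) j

lemma IsTransfMatrix.qQ_lt_succ (ha : IsTransfMatrix a) (j : Fin ℓ) : qQ a j < qQ a (j + 1) :=
  ha.swap.pP_lt_succ j

lemma IsTransfMatrix.sum_sq_qQ_succ_sub_lt_one (ha : IsTransfMatrix a) (hℓ : 2 ≤ ℓ) :
    ∑ j : Fin ℓ, (qQ a (j + 1) - qQ a j) ^ 2 < 1 :=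
  sum_sq_lt_one (fun j => sub_pos.2 (ha.qQ_lt_succ j))
    (by simp_rw [qQ_succ_sub]; rw [Finset.sum_comm]; exact ha.2.1)
    (by rw [Fintype.card_fin]; omega)

end TransfMatrix

section PatchFactor

variable {k ℓ : ℕ} {a : Fin k → Fin ℓ → ℝ}

def patchFactor (a : Fin k → Fin ℓ → ℝ) : ℝ :=
  ∑ j : Fin ℓ, ∑ i : Fin k, a i j ^ 2 * (qQ a (j + 1) - qQ a j) / (pP a (i + 1) - pP a i)

lemma patchFactor_swap : patchFactor (swap a) =
    ∑ j : Fin ℓ, ∑ i : Fin k, a i j ^ 2 * (pP a (i + 1) - pP a i) / (qQ a (j + 1) - qQ a j) :=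
  Finset.sum_comm

lemma IsTransfMatrix.patchFactor_nonneg (ha : IsTransfMatrix a) : 0 ≤ patchFactor a :=
  Finset.sum_nonneg fun j _ => Finset.sum_nonneg fun i _ =>
    div_nonneg (mul_nonneg (sq_nonneg _) (sub_pos.2 (ha.qQ_lt_succ j)).le)
      (sub_pos.2 (ha.pP_lt_succ i)).le

lemma IsTransfMatrix.patchFactor_lt_one (ha : IsTransfMatrix a) (hℓ : 2 ≤ ℓ) :
    patchFactor a < 1 :=
  calc patchFactor a ≤ ∑ j : Fin ℓ, ∑ i : Fin k, a i j * (qQ a (j + 1) - qQ a j) :=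
        Finset.sum_le_sum fun j _ => Finset.sum_le_sum fun i _ => by
          rw [div_le_iff₀ (sub_pos.2 (ha.pP_lt_succ i))]
          nlinarith [mul_le_mul_of_nonneg_left (ha.le_pP_succ_sub i j)
            (mul_nonneg (ha.1 i j) (sub_pos.2 (ha.qQ_lt_succ j)).le)]
    _ = ∑ j : Fin ℓ, (qQ a (j + 1) - qQ a j) ^ 2 := by
        simp_rw [← Finset.sum_mul, ← qQ_succ_sub, sq]
    _ < 1 := ha.sum_sq_qQ_succ_sub_lt_one hℓ

end PatchFactor

lemma sub_div_sub_mem_Ioo {p q u : ℝ} (hu : u ∈ Ioo p q) : (u - p) / (q - p) ∈ Ioo (0:ℝ) 1 :=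
  ⟨div_pos (sub_pos.2 hu.1) (sub_pos.2 (hu.1.trans hu.2)),
    (div_lt_one (sub_pos.2 (hu.1.trans hu.2))).2 (by linarith [hu.2])⟩

lemma deriv_comp_sub_div (f : ℝ → ℝ) (p c x : ℝ) :
    deriv (fun y => f ((y - p) / c)) x = c⁻¹ * deriv f ((x - p) / c) := by
  simp only [div_eq_inv_mul]
  exact (deriv_comp_sub_const (f := fun y => f (c⁻¹ * y)) p x).trans
    (deriv_comp_mul_left c⁻¹ f (x - p))

section Fdist

variable {k ℓ : ℕ} {a : Fin k → Fin ℓ → ℝ} {i i' : Fin k} {j j' : Fin ℓ} {u v : ℝ}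

lemma IsTransfMatrix.Fdist_mem_Icc (ha : IsTransfMatrix a) (i : Fin k) (u : ℝ) :
    Fdist a i u ∈ Icc (0:ℝ) 1 := by
  unfold Fdist
  split_ifs with h
  · exact ⟨le_min zero_le_one (div_nonneg (by linarith) (sub_pos.2 (ha.pP_lt_succ i)).le),
      min_le_left _ _⟩
  · exact ⟨le_rfl, zero_le_one⟩

lemma Fdist_of_mem_Ioo (hu : u ∈ Ioo (pP a i) (pP a (i + 1))) :
    Fdist a i u = (u - pP a i) / (pP a (i + 1) - pP a i) := by
  rw [Fdist, if_pos hu.1, min_eq_right (sub_div_sub_mem_Ioo hu).2.le]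

lemma IsTransfMatrix.Fdist_eq_zero_or_one (ha : IsTransfMatrix a) (hne : i' ≠ i)
    (hu : u ∈ Ioo (pP a i) (pP a (i + 1))) : Fdist a i' u = 0 ∨ Fdist a i' u = 1 := by
  rcases lt_or_gt_of_ne (Fin.val_ne_of_ne hne) with h | h
  · have hle : pP a (i' + 1) ≤ pP a i := ha.pP_mono (by omega)
    have hΔ := sub_pos.2 (ha.pP_lt_succ i')
    right
    rw [Fdist, if_pos (by linarith [ha.pP_lt_succ i', hu.1]),
      min_eq_left ((one_le_div hΔ).2 (by linarith [hu.1]))]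
  · have hle : pP a (i + 1) ≤ pP a i' := ha.pP_mono (by omega)
    left
    rw [Fdist, if_neg (by linarith [hu.2])]

lemma IsTransfMatrix.Gdist_mem_Icc (ha : IsTransfMatrix a) (j : Fin ℓ) (v : ℝ) :
    Gdist a j v ∈ Icc (0:ℝ) 1 :=
  ha.swap.Fdist_mem_Icc j v

lemma Gdist_of_mem_Ioo (hv : v ∈ Ioo (qQ a j) (qQ a (j + 1))) :
    Gdist a j v = (v - qQ a j) / (qQ a (j + 1) - qQ a j) :=
  Fdist_of_mem_Ioo (a := swap a) hv

lemma IsTransfMatrix.Gdist_eq_zero_or_one (ha : IsTransfMatrix a) (hne : j' ≠ j)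
    (hv : v ∈ Ioo (qQ a j) (qQ a (j + 1))) : Gdist a j' v = 0 ∨ Gdist a j' v = 1 :=
  ha.swap.Fdist_eq_zero_or_one hne hv

end Fdist

def VanishesOnSquareBoundary (X : ℝ → ℝ → ℝ) : Prop :=
  ∀ w ∈ Icc (0:ℝ) 1, X 0 w = 0 ∧ X 1 w = 0 ∧ X w 0 = 0 ∧ X w 1 = 0

namespace VanishesOnSquareBoundary

variable {X : ℝ → ℝ → ℝ} {s w : ℝ}

lemma ctransp (hX : VanishesOnSquareBoundary X) : VanishesOnSquareBoundary (ctransp X) :=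
  fun w hw => ⟨(hX w hw).2.2.1, (hX w hw).2.2.2, (hX w hw).1, (hX w hw).2.1⟩

lemma eq_zero_left (hX : VanishesOnSquareBoundary X) (hs : s = 0 ∨ s = 1)
    (hw : w ∈ Icc (0:ℝ) 1) : X s w = 0 := by
  rcases hs with rfl | rfl
  exacts [(hX w hw).1, (hX w hw).2.1]

lemma eq_zero_right (hX : VanishesOnSquareBoundary X) (hs : s = 0 ∨ s = 1)
    (hw : w ∈ Icc (0:ℝ) 1) : X w s = 0 :=
  hX.ctransp.eq_zero_left hs hw

end VanishesOnSquareBoundary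

section Patch

variable {k ℓ : ℕ} {a : Fin k → Fin ℓ → ℝ} {X : ℝ → ℝ → ℝ} {i : Fin k} {j : Fin ℓ} {u v : ℝ}

lemma csub_patch (C D : ℝ → ℝ → ℝ) : csub (patch a C) (patch a D) = patch a (csub C D) := by
  funext u v
  simp only [csub, patch, mul_sub, Finset.sum_sub_distrib]

lemma ctransp_patch (X : ℝ → ℝ → ℝ) : ctransp (patch a X) = patch (swap a) (ctransp X) := by
  funext u v
  simp only [ctransp, patch, swap]
  exact Finset.sum_comm

lemma IsTransfMatrix.patch_eq_of_mem_Ioo (ha : IsTransfMatrix a) (hX : VanishesOnSquareBoundary X)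
    (hu : u ∈ Ioo (pP a i) (pP a (i + 1))) (hv : v ∈ Ioo (qQ a j) (qQ a (j + 1))) :
    patch a X u v = a i j * X (Fdist a i u) (Gdist a j v) := by
  rw [patch, Finset.sum_eq_single i, Finset.sum_eq_single j]
  · intro j' _ hj'
    rw [hX.eq_zero_right (ha.Gdist_eq_zero_or_one hj' hv) (ha.Fdist_mem_Icc i u), mul_zero]
  · simp
  · intro i' _ hi'
    refine Finset.sum_eq_zero fun j' _ => ?_
    rw [hX.eq_zero_left (ha.Fdist_eq_zero_or_one hi' hu) (ha.Gdist_mem_Icc j' v), mul_zero]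
  · simp

lemma IsTransfMatrix.d1_patch (ha : IsTransfMatrix a) (hX : VanishesOnSquareBoundary X)
    (hu : u ∈ Ioo (pP a i) (pP a (i + 1))) (hv : v ∈ Ioo (qQ a j) (qQ a (j + 1))) :
    d1 (patch a X) u v = a i j / (pP a (i + 1) - pP a i) * d1 X (Fdist a i u) (Gdist a j v) := by
  have hloc : (fun x => patch a X x v) =ᶠ[nhds u]
      fun x => a i j * X ((x - pP a i) / (pP a (i + 1) - pP a i)) (Gdist a j v) := by
    filter_upwards [Ioo_mem_nhds hu.1 hu.2] with x hx
    rw [ha.patch_eq_of_mem_Ioo hX hx hv, Fdist_of_mem_Ioo hx]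
  rw [d1, hloc.deriv_eq, deriv_const_mul_field, deriv_comp_sub_div (fun z => X z (Gdist a j v)),
    Fdist_of_mem_Ioo hu, d1]
  ring

lemma IsTransfMatrix.d2_patch (ha : IsTransfMatrix a) (hX : VanishesOnSquareBoundary X)
    (hu : u ∈ Ioo (pP a i) (pP a (i + 1))) (hv : v ∈ Ioo (qQ a j) (qQ a (j + 1))) :
    d2 (patch a X) u v = a i j / (qQ a (j + 1) - qQ a j) * d2 X (Fdist a i u) (Gdist a j v) := by
  have h := ha.swap.d1_patch hX.ctransp hv hu
  rwa [← ctransp_patch] at h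

end Patch

section SquareExtend

variable {X : ℝ → ℝ → ℝ} {u v : ℝ}

-- Clamping to the unit square makes a difference of copulas separately Lipschitz on all of `ℝ²`,
-- so that its partial derivatives are bounded and measurable everywhere.
def squareExtend (X : ℝ → ℝ → ℝ) (u v : ℝ) : ℝ :=
  X (projIcc 0 1 zero_le_one u) (projIcc 0 1 zero_le_one v)

lemma squareExtend_of_mem (hu : u ∈ Icc (0:ℝ) 1) (hv : v ∈ Icc (0:ℝ) 1) :
    squareExtend X u v = X u v := by
  simp [squareExtend, projIcc_of_mem _ hu, projIcc_of_mem _ hv]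

lemma d1_squareExtend (hu : u ∈ Ioo (0:ℝ) 1) (hv : v ∈ Icc (0:ℝ) 1) :
    d1 (squareExtend X) u v = d1 X u v :=
  Filter.EventuallyEq.deriv_eq <| by
    filter_upwards [Ioo_mem_nhds hu.1 hu.2] with x hx
    exact squareExtend_of_mem (Ioo_subset_Icc_self hx) hv

lemma d2_squareExtend (hu : u ∈ Icc (0:ℝ) 1) (hv : v ∈ Ioo (0:ℝ) 1) :
    d2 (squareExtend X) u v = d2 X u v :=
  d1_squareExtend (X := ctransp X) hv hu

lemma sobSq1_eq_squareExtend (X : ℝ → ℝ → ℝ) :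
    sobSq1 X = ∫ v in (0:ℝ)..1, ∫ u in (0:ℝ)..1, d1 (squareExtend X) u v ^ 2 :=
  integral_congr_Ioo_of_le zero_le_one fun _ hv => integral_congr_Ioo_of_le zero_le_one
    fun _ hu => by rw [d1_squareExtend hu (Ioo_subset_Icc_self hv)]

lemma sobSq2_eq_squareExtend (X : ℝ → ℝ → ℝ) :
    sobSq2 X = ∫ v in (0:ℝ)..1, ∫ u in (0:ℝ)..1, d2 (squareExtend X) u v ^ 2 :=
  integral_congr_Ioo_of_le zero_le_one fun _ hv => integral_congr_Ioo_of_le zero_le_one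
    fun _ hu => by rw [d2_squareExtend (Ioo_subset_Icc_self hu) hv]

end SquareExtend

section SeparatelyLipschitz

variable {Y : ℝ → ℝ → ℝ} {K : ℝ≥0}

lemma continuous_uncurry_of_lipschitzWith (h1 : ∀ v, LipschitzWith K fun u => Y u v)
    (h2 : ∀ u, LipschitzWith K fun v => Y u v) : Continuous (uncurry Y) :=
  continuous_prod_of_continuous_lipschitzWith _ K (fun u => (h2 u).continuous) h1

lemma measurable_uncurry_d1 (hY : Continuous (uncurry Y)) : Measurable (uncurry (d1 Y)) :=
  (measurable_deriv_with_param (f := fun v u => Y u v) (hY.comp continuous_swap)).comp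
    measurable_swap

lemma measurable_uncurry_d2 (hY : Continuous (uncurry Y)) : Measurable (uncurry (d2 Y)) :=
  measurable_deriv_with_param hY

lemma abs_d1_le (h1 : ∀ v, LipschitzWith K fun u => Y u v) (u v : ℝ) : |d1 Y u v| ≤ K :=
  norm_deriv_le_of_lipschitz (h1 v)

lemma abs_d2_le (h2 : ∀ u, LipschitzWith K fun v => Y u v) (u v : ℝ) : |d2 Y u v| ≤ K :=
  norm_deriv_le_of_lipschitz (h2 u)

end SeparatelyLipschitz

section SobolevPatch

variable {k ℓ : ℕ} {a : Fin k → Fin ℓ → ℝ} {X : ℝ → ℝ → ℝ} {K : ℝ≥0}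

lemma IsTransfMatrix.sobSq1_patch (ha : IsTransfMatrix a) (hX : VanishesOnSquareBoundary X)
    (hc : Continuous (uncurry (squareExtend X)))
    (h1 : ∀ v, LipschitzWith K fun u => squareExtend X u v) :
    sobSq1 (patch a X) = patchFactor a * sobSq1 X := by
  have key := integral_integral_sq_eq_of_eqOn_rescale ha.pP_lt_succ ha.qQ_lt_succ
    (measurable_uncurry_d1 hc) (abs_d1_le h1) (fun i j => a i j / (pP a (i + 1) - pP a i))
    (f := d1 (patch a X)) fun i j u hu v hv => by
      rw [ha.d1_patch hX hu hv, Fdist_of_mem_Ioo hu, Gdist_of_mem_Ioo hv,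
        d1_squareExtend (sub_div_sub_mem_Ioo hu) (Ioo_subset_Icc_self (sub_div_sub_mem_Ioo hv))]
  rw [pP_zero, ha.pP_eq_one, qQ_zero, ha.qQ_eq_one, ← sobSq1_eq_squareExtend] at key
  refine key.trans (congrArg (· * sobSq1 X) ?_)
  refine Finset.sum_congr rfl fun j _ => Finset.sum_congr rfl fun i _ => ?_
  have hΔ := (sub_pos.2 (ha.pP_lt_succ i)).ne'
  field_simp

lemma IsTransfMatrix.sobSq2_patch (ha : IsTransfMatrix a) (hX : VanishesOnSquareBoundary X)
    (hc : Continuous (uncurry (squareExtend X)))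
    (h2 : ∀ u, LipschitzWith K fun v => squareExtend X u v) :
    sobSq2 (patch a X) = patchFactor (Function.swap a) * sobSq2 X := by
  have key := integral_integral_sq_eq_of_eqOn_rescale ha.pP_lt_succ ha.qQ_lt_succ
    (measurable_uncurry_d2 hc) (abs_d2_le h2) (fun i j => a i j / (qQ a (j + 1) - qQ a j))
    (f := d2 (patch a X)) fun i j u hu v hv => by
      rw [ha.d2_patch hX hu hv, Fdist_of_mem_Ioo hu, Gdist_of_mem_Ioo hv,
        d2_squareExtend (Ioo_subset_Icc_self (sub_div_sub_mem_Ioo hu)) (sub_div_sub_mem_Ioo hv)]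
  rw [pP_zero, ha.pP_eq_one, qQ_zero, ha.qQ_eq_one, ← sobSq2_eq_squareExtend] at key
  refine key.trans (congrArg (· * sobSq2 X) ?_)
  rw [patchFactor_swap]
  refine Finset.sum_congr rfl fun j _ => Finset.sum_congr rfl fun i _ => ?_
  have hΔ := (sub_pos.2 (ha.qQ_lt_succ j)).ne'
  field_simp

end SobolevPatch

section Copula

variable {C D : ℝ → ℝ → ℝ}

lemma IsCopula.ctransp (hC : IsCopula C) : IsCopula (ctransp C) :=
  ⟨hC.2.1, hC.1, hC.2.2.2.1, hC.2.2.1, fun u₁ u₂ v₁ v₂ hu₁ hu₂ hv₁ hv₂ hu hv => by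
    have := hC.2.2.2.2 v₁ v₂ u₁ u₂ hv₁ hv₂ hu₁ hu₂ hv hu
    show 0 ≤ C v₂ u₂ - C v₁ u₂ - C v₂ u₁ + C v₁ u₁
    linarith⟩

lemma IsCopula.abs_sub_le_left (hC : IsCopula C) {x y w : ℝ} (hx : x ∈ Icc (0:ℝ) 1)
    (hy : y ∈ Icc (0:ℝ) 1) (hw : w ∈ Icc (0:ℝ) 1) : |C x w - C y w| ≤ |x - y| := by
  wlog hxy : y ≤ x generalizing x y
  · rw [abs_sub_comm, abs_sub_comm x]
    exact this hy hx (le_of_not_ge hxy)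
  obtain ⟨h0, -, h1, -, hrect⟩ := hC
  have hlow := hrect y x 0 w hy hx ⟨le_rfl, zero_le_one⟩ hw hxy hw.1
  have hup := hrect y x w 1 hy hx hw ⟨zero_le_one, le_rfl⟩ hxy hw.2
  rw [h0 x hx, h0 y hy] at hlow
  rw [h1 x hx, h1 y hy] at hup
  rw [abs_of_nonneg (by linarith), abs_of_nonneg (sub_nonneg.2 hxy)]
  linarith

lemma IsCopula.lipschitzWith_squareExtend_left (hC : IsCopula C) (v : ℝ) :
    LipschitzWith 1 fun u => squareExtend C u v :=
  LipschitzWith.of_dist_le_mul fun x y => by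
    simpa [squareExtend, Real.dist_eq] using (hC.abs_sub_le_left (projIcc 0 1 zero_le_one x).2
      (projIcc 0 1 zero_le_one y).2 (projIcc 0 1 zero_le_one v).2).trans
      (abs_projIcc_sub_projIcc zero_le_one)

lemma lipschitzWith_squareExtend_csub_left (hC : IsCopula C) (hD : IsCopula D) (v : ℝ) :
    LipschitzWith 2 fun u => squareExtend (csub C D) u v := by
  have h := (hC.lipschitzWith_squareExtend_left v).sub (hD.lipschitzWith_squareExtend_left v)
  rwa [one_add_one_eq_two] at h

lemma lipschitzWith_squareExtend_csub_right (hC : IsCopula C) (hD : IsCopula D) (u : ℝ) :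
    LipschitzWith 2 fun v => squareExtend (csub C D) u v :=
  lipschitzWith_squareExtend_csub_left hC.ctransp hD.ctransp u

lemma vanishesOnSquareBoundary_csub (hC : IsCopula C) (hD : IsCopula D) :
    VanishesOnSquareBoundary (csub C D) := fun w hw => by
  simp only [csub, hC.1 w hw, hD.1 w hw, hC.2.1 w hw, hD.2.1 w hw, hC.2.2.1 w hw, hD.2.2.1 w hw,
    hC.2.2.2.1 w hw, hD.2.2.2.1 w hw, sub_self, and_self]

end Copula

lemma sobSq1_nonneg (X : ℝ → ℝ → ℝ) : 0 ≤ sobSq1 X :=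
  integral_nonneg zero_le_one fun _ _ => integral_nonneg zero_le_one fun _ _ => sq_nonneg _

lemma sobSq2_nonneg (X : ℝ → ℝ → ℝ) : 0 ≤ sobSq2 X :=
  integral_nonneg zero_le_one fun _ _ => integral_nonneg zero_le_one fun _ _ => sq_nonneg _

lemma sqrt_add_le_sqrt_max_mul {s₁ s₂ x₁ x₂ : ℝ} (hs₁ : 0 ≤ s₁) (hx₁ : 0 ≤ x₁) (hx₂ : 0 ≤ x₂) :
    √(s₁ * x₁ + s₂ * x₂) ≤ √(max s₁ s₂) * √(x₁ + x₂) := by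
  rw [← Real.sqrt_mul (le_max_of_le_left hs₁)]
  exact Real.sqrt_le_sqrt (by nlinarith [mul_le_mul_of_nonneg_right (le_max_left s₁ s₂) hx₁,
    mul_le_mul_of_nonneg_right (le_max_right s₁ s₂) hx₂])

/-- Let `A = [a_{ij}]` be a `k × ℓ` transformation matrix with `k, ℓ ≥ 2` and
let `C, D` be copulas.  Then `‖[A](C) − [A](D)‖_S ≤ r ‖C − D‖_S` where
`r² = max(Σ_j Σ_i a_{ij}² Δq_j/Δp_i, Σ_j Σ_i a_{ij}² Δp_i/Δq_j)`, and moreover `r < 1`. -/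
theorem stmt12 {k ℓ : ℕ} (hk : 2 ≤ k) (hℓ : 2 ≤ ℓ)
    (a : Fin k → Fin ℓ → ℝ) (ha : IsTransfMatrix a)
    (C D : ℝ → ℝ → ℝ) (hC : IsCopula C) (hD : IsCopula D) :
    sobNorm (csub (patch a C) (patch a D)) ≤
      Real.sqrt (max
        (∑ j : Fin ℓ, ∑ i : Fin k, (a i j) ^ 2 *
          (qQ a ((j : ℕ) + 1) - qQ a (j : ℕ)) / (pP a ((i : ℕ) + 1) - pP a (i : ℕ)))
        (∑ j : Fin ℓ, ∑ i : Fin k, (a i j) ^ 2 *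
          (pP a ((i : ℕ) + 1) - pP a (i : ℕ)) / (qQ a ((j : ℕ) + 1) - qQ a (j : ℕ)))) *
      sobNorm (csub C D) ∧
    Real.sqrt (max
        (∑ j : Fin ℓ, ∑ i : Fin k, (a i j) ^ 2 *
          (qQ a ((j : ℕ) + 1) - qQ a (j : ℕ)) / (pP a ((i : ℕ) + 1) - pP a (i : ℕ)))
        (∑ j : Fin ℓ, ∑ i : Fin k, (a i j) ^ 2 *
          (pP a ((i : ℕ) + 1) - pP a (i : ℕ)) / (qQ a ((j : ℕ) + 1) - qQ a (j : ℕ)))) < 1 := by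
  have hX := vanishesOnSquareBoundary_csub hC hD
  have h1 := lipschitzWith_squareExtend_csub_left hC hD
  have h2 := lipschitzWith_squareExtend_csub_right hC hD
  have hc := continuous_uncurry_of_lipschitzWith h1 h2
  rw [← patchFactor_swap, csub_patch]
  change sobNorm _ ≤ √(max (patchFactor a) _) * _ ∧ √(max (patchFactor a) _) < 1
  refine ⟨?_, (Real.sqrt_lt' one_pos).2 ?_⟩
  · rw [sobNorm, sobNorm, ha.sobSq1_patch hX hc h1, ha.sobSq2_patch hX hc h2]
    exact sqrt_add_le_sqrt_max_mul ha.patchFactor_nonneg (sobSq1_nonneg _) (sobSq2_nonneg _)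
  · rw [one_pow]
    exact max_lt (ha.patchFactor_lt_one hℓ) (ha.swap.patchFactor_lt_one hk)
end
end
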